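/- arXiv:2603.21532 — 7 statements merged into one kernel-verified Lean document; each statement's English description precedes it below -/
import Mathlib

section
/- Let E be a finite ground set, F ⊆ 2^E a downward-closed family containing the empty set, and let p ∈ (0,1)^E lie in the relative interior of the polytope conv{1_S : S ∈ F} (equivalently, assume there exists a full-support distribution on F with marginals p). Then the unique distribution μ* on F that maximizes the Shannon entropy −Σ_{S∈F} μ(S) log μ(S) subject to P_{S∼μ}[e ∈ S] = p_e for all e ∈ E has the Gibbs product form: there exist weights w_e > 0 such that μ*(S) = (∏_{e∈S} w_e)/Z for all S ∈ F, where Z = Σ_{T∈F} ∏_{e∈T} w_e. Moreover, setting ρ_e = w_e/(1+w_e) ∈ (0,1), for every e ∈ E and every T ∈ F with e ∉ T and P_{S∼μ*}[S∖{e} = T] > 0, the conditional probability P_{S∼μ*}[e ∈ S | S∖{e} = T] equals ρ_e if T ∪ {e} ∈ F and equals 0 otherwise. -/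
/-!
Entropy is strictly concave on the convex set of distributions on `F` with marginals `p`, which
gives uniqueness of the maximizer `μ*`. Since `negMulLog` has infinite slope at `0`, a maximizer
vanishing somewhere on `F` could be improved by moving slightly towards the full-support
distribution, so `μ*` is positive on `F`. First-order optimality along every feasible direction
then says that `log μ*` is orthogonal to all `h` supported on `F` with zero total mass and zero
marginals; by linear duality `log μ*(S) = c₀ + ∑_{e ∈ S} c_e` on `F`, which is the Gibbs form with
`w_e = exp c_e`. The conditional probabilities are ratios of two Gibbs weights.
-/

open Finset Real Filter Topology Matrix

section Entropy

variable {ι : Type*} [Fintype ι]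

noncomputable def shannonEntropy (ν : ι → ℝ) : ℝ := ∑ i, negMulLog (ν i)

theorem shannonEntropy_eq_neg_sum_mul_log {s : Finset ι} {ν : ι → ℝ}
    (hν : ∀ i, ν i ≠ 0 → i ∈ s) : shannonEntropy ν = -∑ i ∈ s, ν i * log (ν i) := by
  rw [shannonEntropy, ← sum_subset (subset_univ s) fun i _ hi => by
    rw [not_imp_comm.1 (hν i) hi, negMulLog_zero], ← sum_neg_distrib]
  simp only [negMulLog, neg_mul]

theorem strictConcaveOn_shannonEntropy :
    StrictConcaveOn ℝ (Set.Ici (0 : ι → ℝ)) shannonEntropy := by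
  refine ⟨convex_Ici 0, fun μ hμ ν hν hne a b ha hb hab => ?_⟩
  obtain ⟨i, hi⟩ := Function.ne_iff.1 hne
  simp only [shannonEntropy, smul_eq_mul, mul_sum, ← sum_add_distrib]
  refine sum_lt_sum (fun j _ => ?_) ⟨i, mem_univ i, ?_⟩
  · exact concaveOn_negMulLog.2 (hμ j) (hν j) ha.le hb.le hab
  · exact strictConcaveOn_negMulLog.2 (hμ i) (hν i) hi ha hb hab

theorem le_shannonEntropy_smul_add_smul_of_apply_eq_zero {μ ν : ι → ℝ} (hμ : 0 ≤ μ) (hν : 0 ≤ ν)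
    {i : ι} (hμi : μ i = 0) {t : ℝ} (ht₀ : 0 ≤ t) (ht₁ : t ≤ 1) :
    (1 - t) * shannonEntropy μ + t * shannonEntropy ν + ν i * negMulLog t ≤
      shannonEntropy ((1 - t) • μ + t • ν) := by
  classical
  have hterm : ∀ j, (1 - t) * negMulLog (μ j) + t * negMulLog (ν j) +
      (if j = i then ν i * negMulLog t else 0) ≤ negMulLog ((1 - t) * μ j + t * ν j) := by
    intro j
    split_ifs with hj
    · subst hj
      rw [hμi]
      simp only [negMulLog_zero, mul_zero, zero_add, negMulLog_mul]
      linarith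
    · simpa using concaveOn_negMulLog.2 (hμ j) (hν j) (by linarith) ht₀ (by ring)
  calc _ = ∑ j, ((1 - t) * negMulLog (μ j) + t * negMulLog (ν j) +
        if j = i then ν i * negMulLog t else 0) := by
        simp [shannonEntropy, sum_add_distrib, mul_sum]
    _ ≤ _ := sum_le_sum fun j _ => by simpa using hterm j

theorem pos_of_isMaxOn_shannonEntropy {C : Set (ι → ℝ)} {μ ν : ι → ℝ} (hC : Convex ℝ C)
    (hmax : IsMaxOn shannonEntropy C μ) (hμC : μ ∈ C) (hνC : ν ∈ C) (hμ : 0 ≤ μ) (hν : 0 ≤ ν)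
    {i : ι} (hνi : 0 < ν i) : 0 < μ i := by
  by_contra hμi
  replace hμi : μ i = 0 := le_antisymm (not_lt.1 hμi) (hμ i)
  -- `negMulLog t / t = -log t → ∞`, so a small step towards `ν` gains more than it loses.
  obtain ⟨t, ⟨ht₀, ht₁⟩, hlog⟩ :=
    ((show ∀ᶠ t in 𝓝[>] (0 : ℝ), t ∈ Set.Ioo 0 1 from Ioo_mem_nhdsGT one_pos).and
    (tendsto_log_nhdsGT_zero.eventually_lt_atBot
      ((shannonEntropy ν - shannonEntropy μ) / ν i))).exists
  rw [lt_div_iff₀ hνi] at hlog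
  have hgain := le_shannonEntropy_smul_add_smul_of_apply_eq_zero hμ hν hμi ht₀.le ht₁.le
  have hmax_t := isMaxOn_iff.1 hmax _ (hC hμC hνC (sub_nonneg.2 ht₁.le) ht₀.le (sub_add_cancel 1 t))
  rw [negMulLog] at hgain
  nlinarith [mul_pos ht₀ (sub_pos.2 hlog)]

theorem sum_mul_log_add_one_eq_zero_of_isMaxOn {C : Set (ι → ℝ)} {μ h : ι → ℝ}
    (hmax : IsMaxOn shannonEntropy C μ) (hh : ∀ i, h i ≠ 0 → 0 < μ i)
    (hC : ∀ᶠ t in 𝓝 (0 : ℝ), μ + t • h ∈ C) : ∑ i, h i * (log (μ i) + 1) = 0 := by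
  have hderiv : HasDerivAt (fun t : ℝ => shannonEntropy (μ + t • h))
      (∑ i, h i * -(log (μ i) + 1)) 0 := by
    refine HasDerivAt.fun_sum fun i _ => ?_
    by_cases hi : h i = 0
    · simpa [hi] using hasDerivAt_const (0 : ℝ) (negMulLog (μ i))
    · have hlin : HasDerivAt (fun t : ℝ => (μ + t • h) i) (h i) 0 := by
        simpa using ((hasDerivAt_id (0 : ℝ)).mul_const (h i)).const_add (μ i)
      rw [show h i * -(log (μ i) + 1) = (-log (μ i) - 1) * h i by ring]
      exact (hasDerivAt_negMulLog (hh i hi).ne').comp_of_eq 0 hlin (by simp)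
  have hloc : IsLocalMax (fun t : ℝ => shannonEntropy (μ + t • h)) 0 :=
    hC.mono fun t ht => by simpa using isMaxOn_iff.1 hmax _ ht
  simpa only [mul_neg, sum_neg_distrib, neg_eq_zero] using hloc.hasDerivAt_eq_zero hderiv

end Entropy

theorem exists_eq_sum_mul_of_dotProduct_eq_zero {ι κ : Type*} [Fintype ι] [Fintype κ]
    (s : Finset ι) (v : κ → ι → ℝ) (g : ι → ℝ)
    (h : ∀ x : ι → ℝ, (∀ i ∉ s, x i = 0) → (∀ k, x ⬝ᵥ v k = 0) → x ⬝ᵥ g = 0) :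
    ∃ c : κ → ℝ, ∀ i ∈ s, g i = ∑ k, c k * v k i := by
  classical
  -- the constraint `x i = 0` for `i ∉ s` is imposed by the evaluation functionals
  let L : κ ⊕ {i // i ∉ s} → (ι → ℝ) →ₗ[ℝ] ℝ :=
    Sum.elim (fun k => Fintype.linearCombination ℝ (v k)) fun j => LinearMap.proj (j : ι)
  have hg : Fintype.linearCombination ℝ g ∈ Submodule.span ℝ (Set.range L) := by
    refine mem_span_of_iInf_ker_le_ker fun x hx => ?_
    simp only [Submodule.mem_iInf, LinearMap.mem_ker, Sum.forall, L, Sum.elim_inl,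
      Sum.elim_inr, LinearMap.coe_proj, Function.eval] at hx
    exact h x (fun i hi => hx.2 ⟨i, hi⟩) hx.1
  obtain ⟨c, hc⟩ := (Submodule.mem_span_range_iff_exists_fun ℝ).1 hg
  refine ⟨fun k => c (.inl k), fun i hi => ?_⟩
  have hci := LinearMap.congr_fun hc (Pi.single i 1)
  simp only [Fintype.sum_sum_type, Sum.elim_inl, Sum.elim_inr, LinearMap.add_apply,
    LinearMap.coe_sum, LinearMap.coe_smul, Finset.sum_apply, Pi.smul_apply,
    Fintype.linearCombination_apply_single, smul_eq_mul, one_mul, LinearMap.coe_proj,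
    Function.eval, L] at hci
  have hout : ∑ j : {j // j ∉ s}, c (.inr j) * Pi.single (M := fun _ => ℝ) i 1 (j : ι) = 0 :=
    Fintype.sum_eq_zero _ fun j => by
      rw [Pi.single_eq_of_ne (ne_of_mem_of_not_mem hi j.2).symm, mul_zero]
  rw [← hci, hout, add_zero]

section Marginals

variable {E : Type*} [Fintype E] [DecidableEq E] {F : Finset (Finset E)} {p : E → ℝ}

def distribsWithMarginals (F : Finset (Finset E)) (p : E → ℝ) : Set (Finset E → ℝ) :=
  {ν | (∀ S, 0 ≤ ν S) ∧ (∀ S, ν S ≠ 0 → S ∈ F) ∧ (∑ S, ν S) = 1 ∧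
    ∀ e, ∑ S ∈ univ.filter (fun S => e ∈ S), ν S = p e}

theorem apply_eq_zero_of_mem_distribsWithMarginals {ν : Finset E → ℝ}
    (hν : ν ∈ distribsWithMarginals F p) {S : Finset E} (hS : S ∉ F) : ν S = 0 :=
  not_imp_comm.1 (hν.2.1 S) hS

theorem convex_distribsWithMarginals : Convex ℝ (distribsWithMarginals F p) := by
  intro ν hν ν' hν' a b ha hb hab
  refine ⟨fun S => ?_, fun S hS => ?_, ?_, fun e => ?_⟩
  · have := hν.1 S
    have := hν'.1 S
    simp only [Pi.add_apply, Pi.smul_apply, smul_eq_mul]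
    positivity
  · by_contra hSF
    simp [apply_eq_zero_of_mem_distribsWithMarginals hν hSF,
      apply_eq_zero_of_mem_distribsWithMarginals hν' hSF] at hS
  · simp [sum_add_distrib, ← mul_sum, hν.2.2.1, hν'.2.2.1, hab]
  · simp [sum_add_distrib, ← mul_sum, hν.2.2.2, hν'.2.2.2, ← add_mul, hab]

theorem eventually_add_smul_mem_distribsWithMarginals {μ h : Finset E → ℝ}
    (hμ : μ ∈ distribsWithMarginals F p) (hμF : ∀ S ∈ F, 0 < μ S) (hhF : ∀ S ∉ F, h S = 0)
    (hh₁ : ∑ S, h S = 0) (hhp : ∀ e, ∑ S ∈ univ.filter (fun S => e ∈ S), h S = 0) :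
    ∀ᶠ t in 𝓝 (0 : ℝ), μ + t • h ∈ distribsWithMarginals F p := by
  have hnonneg : ∀ᶠ t in 𝓝 (0 : ℝ), ∀ S, 0 ≤ μ S + t * h S := by
    refine eventually_all.2 fun S => ?_
    by_cases hS : S ∈ F
    · have : Tendsto (fun t : ℝ => μ S + t * h S) (𝓝 0) (𝓝 (μ S)) := by
        simpa using ((tendsto_id (x := 𝓝 (0 : ℝ))).mul_const (h S)).const_add (μ S)
      exact (this.eventually_const_lt (hμF S hS)).mono fun _ => le_of_lt
    · simp [apply_eq_zero_of_mem_distribsWithMarginals hμ hS, hhF S hS]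
  refine hnonneg.mono fun t ht => ⟨ht, fun S hS => ?_, ?_, fun e => ?_⟩
  · by_contra hSF
    simp [apply_eq_zero_of_mem_distribsWithMarginals hμ hSF, hhF S hSF] at hS
  · simp [sum_add_distrib, ← mul_sum, hμ.2.2.1, hh₁]
  · simp [sum_add_distrib, ← mul_sum, hμ.2.2.2, hhp]

theorem exists_log_eq_add_sum_of_isMaxOn {μ : Finset E → ℝ}
    (hμ : μ ∈ distribsWithMarginals F p)
    (hmax : IsMaxOn shannonEntropy (distribsWithMarginals F p) μ) (hμF : ∀ S ∈ F, 0 < μ S) :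
    ∃ (c₀ : ℝ) (c : E → ℝ), ∀ S ∈ F, log (μ S) = c₀ + ∑ e ∈ S, c e := by
  have horth : ∀ h : Finset E → ℝ, (∀ S ∉ F, h S = 0) →
      (∀ o : Option E, h ⬝ᵥ (fun S => o.elim 1 fun e => if e ∈ S then 1 else 0) = 0) →
      h ⬝ᵥ (fun S => log (μ S)) = 0 := by
    intro h hhF hh
    have hh₁ : ∑ S, h S = 0 := by simpa [dotProduct] using hh none
    have hhp : ∀ e, ∑ S ∈ univ.filter (fun S => e ∈ S), h S = 0 := fun e => by
      simpa [dotProduct, sum_filter] using hh (some e)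
    have hstat := sum_mul_log_add_one_eq_zero_of_isMaxOn hmax
      (fun S hS => hμF S (not_imp_comm.1 (hhF S) hS))
      (eventually_add_smul_mem_distribsWithMarginals hμ hμF hhF hh₁ hhp)
    simpa [dotProduct, mul_add, sum_add_distrib, hh₁] using hstat
  -- the feature `none` is the total mass and becomes the normalizing constant `c₀`
  obtain ⟨c, hc⟩ := exists_eq_sum_mul_of_dotProduct_eq_zero F _ _ horth
  refine ⟨c none, fun e => c (some e), fun S hS => ?_⟩
  simp [hc S hS, Fintype.sum_option, sum_ite_mem]

theorem exists_gibbs_of_isMaxOn {μ : Finset E → ℝ} (hμ : μ ∈ distribsWithMarginals F p)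
    (hmax : IsMaxOn shannonEntropy (distribsWithMarginals F p) μ) (hμF : ∀ S ∈ F, 0 < μ S) :
    ∃ w : E → ℝ, (∀ e, 0 < w e) ∧
      ∀ S ∈ F, μ S = (∏ e ∈ S, w e) / ∑ T ∈ F, ∏ e ∈ T, w e := by
  obtain ⟨c₀, c, hc⟩ := exists_log_eq_add_sum_of_isMaxOn hμ hmax hμF
  have hμc : ∀ S ∈ F, μ S = exp c₀ * ∏ e ∈ S, exp (c e) := fun S hS => by
    rw [← exp_log (hμF S hS), hc S hS, exp_add, exp_sum]
  have hZ : exp c₀ * ∑ T ∈ F, ∏ e ∈ T, exp (c e) = 1 := by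
    rw [mul_sum, ← sum_congr rfl hμc, sum_subset (subset_univ F) fun S _ hS =>
      apply_eq_zero_of_mem_distribsWithMarginals hμ hS, hμ.2.2.1]
  refine ⟨fun e => exp (c e), fun e => exp_pos _, fun S hS => ?_⟩
  rw [hμc S hS, eq_div_iff (right_ne_zero_of_mul_eq_one hZ), mul_right_comm, hZ, one_mul]

end Marginals

theorem apply_insert_div_eq_ite_of_gibbs {E : Type*} [DecidableEq E] {F : Finset (Finset E)}
    {μ : Finset E → ℝ} {w : E → ℝ} (hw : ∀ e, 0 < w e)
    (hμF : ∀ S, μ S ≠ 0 → S ∈ F)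
    (hμ : ∀ S ∈ F, μ S = (∏ e ∈ S, w e) / ∑ T ∈ F, ∏ e ∈ T, w e)
    {e : E} {T : Finset E} (hT : T ∈ F) (heT : e ∉ T) :
    μ (insert e T) / (μ T + μ (insert e T)) = if insert e T ∈ F then w e / (1 + w e) else 0 := by
  split_ifs with heTF
  · have hZ : 0 < ∑ T ∈ F, ∏ e ∈ T, w e := sum_pos (fun T _ => prod_pos fun e _ => hw e) ⟨T, hT⟩
    have hP : 0 < ∏ e ∈ T, w e := prod_pos fun e _ => hw e
    have hwe := hw e
    rw [hμ T hT, hμ _ heTF, prod_insert heT]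
    field_simp
  · rw [not_imp_comm.1 (hμF _) heTF, zero_div]

theorem stmt_0_general
    {E : Type*} [Fintype E] [DecidableEq E]
    (F : Finset (Finset E))
    (p : E → ℝ)
    -- relative interior hypothesis: there is a full-support distribution on F with marginals p
    (hrelint : ∃ ν : Finset E → ℝ,
      (∀ S, 0 ≤ ν S) ∧ (∀ S, ν S ≠ 0 → S ∈ F) ∧ (∀ S ∈ F, 0 < ν S) ∧
      (∑ S : Finset E, ν S) = 1 ∧
      (∀ e, ∑ S ∈ univ.filter (fun S => e ∈ S), ν S = p e))
    -- μstar is a distribution on F with marginals p ...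
    (μstar : Finset E → ℝ)
    (hμ_nonneg : ∀ S, 0 ≤ μstar S)
    (hμ_supp : ∀ S, μstar S ≠ 0 → S ∈ F)
    (hμ_sum : (∑ S : Finset E, μstar S) = 1)
    (hμ_marg : ∀ e, ∑ S ∈ univ.filter (fun S => e ∈ S), μstar S = p e)
    -- ... that maximizes the Shannon entropy among all such distributions
    (hμ_max : ∀ ν : Finset E → ℝ,
      (∀ S, 0 ≤ ν S) → (∀ S, ν S ≠ 0 → S ∈ F) → (∑ S : Finset E, ν S) = 1 →
      (∀ e, ∑ S ∈ univ.filter (fun S => e ∈ S), ν S = p e) →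
      (-∑ S ∈ F, ν S * Real.log (ν S)) ≤ (-∑ S ∈ F, μstar S * Real.log (μstar S))) :
    -- uniqueness of the entropy maximizer
    (∀ ν : Finset E → ℝ,
      (∀ S, 0 ≤ ν S) → (∀ S, ν S ≠ 0 → S ∈ F) → (∑ S : Finset E, ν S) = 1 →
      (∀ e, ∑ S ∈ univ.filter (fun S => e ∈ S), ν S = p e) →
      ((-∑ S ∈ F, μstar S * Real.log (μstar S)) ≤ -∑ S ∈ F, ν S * Real.log (ν S)) →
      ν = μstar)
    -- Gibbs product form, and the conditional probability formula
    ∧ ∃ w : E → ℝ, (∀ e, 0 < w e) ∧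
      (∀ S ∈ F, μstar S = (∏ e ∈ S, w e) / (∑ T ∈ F, ∏ e ∈ T, w e)) ∧
      (∀ e, 0 < w e / (1 + w e) ∧ w e / (1 + w e) < 1) ∧
      (∀ e : E, ∀ T ∈ F, e ∉ T →
        0 < μstar T + μstar (insert e T) →
        μstar (insert e T) / (μstar T + μstar (insert e T)) =
          if insert e T ∈ F then w e / (1 + w e) else 0) := by
  obtain ⟨ν₀, hν₀_nonneg, hν₀_supp, hν₀_pos, hν₀_sum, hν₀_marg⟩ := hrelint
  set D := distribsWithMarginals F p
  have hμ : μstar ∈ D := ⟨hμ_nonneg, hμ_supp, hμ_sum, hμ_marg⟩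
  have hmax : IsMaxOn shannonEntropy D μstar := fun ν hν => by
    show shannonEntropy ν ≤ shannonEntropy μstar
    rw [shannonEntropy_eq_neg_sum_mul_log hν.2.1,
      shannonEntropy_eq_neg_sum_mul_log hμ_supp]
    exact hμ_max ν hν.1 hν.2.1 hν.2.2.1 hν.2.2.2
  have hpos : ∀ S ∈ F, 0 < μstar S := fun S hS =>
    pos_of_isMaxOn_shannonEntropy convex_distribsWithMarginals hmax hμ
      ⟨hν₀_nonneg, hν₀_supp, hν₀_sum, hν₀_marg⟩ hμ_nonneg hν₀_nonneg (hν₀_pos S hS)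
  obtain ⟨w, hw, hgibbs⟩ := exists_gibbs_of_isMaxOn hμ hmax hpos
  refine ⟨fun ν hν_nonneg hν_supp hν_sum hν_marg hle => ?_, w, hw, hgibbs, fun e => ?_,
    fun e T hT heT _ => apply_insert_div_eq_ite_of_gibbs hw hμ_supp hgibbs hT heT⟩
  · have hν : ν ∈ D := ⟨hν_nonneg, hν_supp, hν_sum, hν_marg⟩
    rw [← shannonEntropy_eq_neg_sum_mul_log hμ_supp,
      ← shannonEntropy_eq_neg_sum_mul_log hν_supp] at hle
    exact (strictConcaveOn_shannonEntropy.subset (fun ν hν => hν.1)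
      convex_distribsWithMarginals).eq_of_isMaxOn (fun ν' hν' => (hmax hν').trans hle) hmax hν hμ
  · have h1w : 0 < 1 + w e := by linarith [hw e]
    exact ⟨div_pos (hw e) h1w, (div_lt_one h1w).2 (by linarith)⟩

theorem stmt_0
    {E : Type*} [Fintype E] [DecidableEq E]
    (F : Finset (Finset E))
    (hF_down : ∀ S ∈ F, ∀ T ⊆ S, T ∈ F)
    (hF_empty : ∅ ∈ F)
    (p : E → ℝ) (hp : ∀ e, 0 < p e ∧ p e < 1)
    -- relative interior hypothesis: there is a full-support distribution on F with marginals p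
    (hrelint : ∃ ν : Finset E → ℝ,
      (∀ S, 0 ≤ ν S) ∧ (∀ S, ν S ≠ 0 → S ∈ F) ∧ (∀ S ∈ F, 0 < ν S) ∧
      (∑ S : Finset E, ν S) = 1 ∧
      (∀ e, ∑ S ∈ univ.filter (fun S => e ∈ S), ν S = p e))
    -- μstar is a distribution on F with marginals p ...
    (μstar : Finset E → ℝ)
    (hμ_nonneg : ∀ S, 0 ≤ μstar S)
    (hμ_supp : ∀ S, μstar S ≠ 0 → S ∈ F)
    (hμ_sum : (∑ S : Finset E, μstar S) = 1)
    (hμ_marg : ∀ e, ∑ S ∈ univ.filter (fun S => e ∈ S), μstar S = p e)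
    -- ... that maximizes the Shannon entropy among all such distributions
    (hμ_max : ∀ ν : Finset E → ℝ,
      (∀ S, 0 ≤ ν S) → (∀ S, ν S ≠ 0 → S ∈ F) → (∑ S : Finset E, ν S) = 1 →
      (∀ e, ∑ S ∈ univ.filter (fun S => e ∈ S), ν S = p e) →
      (-∑ S ∈ F, ν S * Real.log (ν S)) ≤ (-∑ S ∈ F, μstar S * Real.log (μstar S))) :
    -- uniqueness of the entropy maximizer
    (∀ ν : Finset E → ℝ,
      (∀ S, 0 ≤ ν S) → (∀ S, ν S ≠ 0 → S ∈ F) → (∑ S : Finset E, ν S) = 1 →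
      (∀ e, ∑ S ∈ univ.filter (fun S => e ∈ S), ν S = p e) →
      ((-∑ S ∈ F, μstar S * Real.log (μstar S)) ≤ -∑ S ∈ F, ν S * Real.log (ν S)) →
      ν = μstar)
    -- Gibbs product form, and the conditional probability formula
    ∧ ∃ w : E → ℝ, (∀ e, 0 < w e) ∧
      (∀ S ∈ F, μstar S = (∏ e ∈ S, w e) / (∑ T ∈ F, ∏ e ∈ T, w e)) ∧
      (∀ e, 0 < w e / (1 + w e) ∧ w e / (1 + w e) < 1) ∧
      (∀ e : E, ∀ T ∈ F, e ∉ T →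
        0 < μstar T + μstar (insert e T) →
        μstar (insert e T) / (μstar T + μstar (insert e T)) =
          if insert e T ∈ F then w e / (1 + w e) else 0) :=
  stmt_0_general F p hrelint μstar hμ_nonneg hμ_supp hμ_sum hμ_marg hμ_max
end

section
/- Let G = (V,E) be a finite simple graph and let x ∈ [0,1]^E satisfy Σ_{e ∋ v} x_e ≤ 1 for every vertex v ∈ V. Then there exists a probability distribution μ on the matchings of G such that: (i) P_{S∼μ}[e ∈ S] = x_e/3 for every edge e ∈ E, and (ii) for every edge e ∈ E and every matching T with e ∉ T and P_{S∼μ}[S∖{e} = T] > 0, we have P_{S∼μ}[e ∈ S | S∖{e} = T] ≤ x_e. In particular, there is a (1/3)-selectable stationary online contention resolution scheme for the matching feasibility environment. -/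
open Finset

/-- `S` is a matching: the (endpoint sets of the) edges in `S` are pairwise disjoint. -/
def IsMatching {V E : Type*} [DecidableEq V] (ends : E → Finset V) (S : Finset E) : Prop :=
  ∀ e ∈ S, ∀ f ∈ S, e ≠ f → Disjoint (ends e) (ends f)

/-!
Take `μ` to be a Gibbs distribution, `μ S ∝ ∏_{e ∈ S} λ_e`, on the matchings inside the support
of `x`, with `λ = exp θ` chosen so that the marginals are exactly `x / 3`: `θ` minimises the convex
dual `log Z(θ) - ∑ (x_e / 3) θ_e`. The minimum exists because a greedy matching `S` gives
`∑ x_e θ_e⁺ ≤ 2 ∑_{e ∈ S} θ_e ≤ 2 log Z(θ)`, which makes the dual coercive.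

For a matching `T ∌ e`, the conditional probability in (ii) is `λ_e / (1 + λ_e) ≤ λ_e`. Deleting `e`
matches the matchings containing `e` with those avoiding its neighbourhood, so
`(x_e / 3) Z = λ_e Z_e`; by the union bound over the neighbourhood, whose `x`-weight is at most `2`,
`Z - Z_e ≤ 2 Z / 3`. Hence `λ_e ≤ x_e`.
-/

theorem Finset.sum_filter_exists_le {ι α M : Type*} [AddCommMonoid M] [PartialOrder M]
    [IsOrderedAddMonoid M] (s : Finset α) (N : Finset ι) (r : ι → α → Prop)
    [∀ i, DecidablePred (r i)] [DecidablePred fun a => ∃ i ∈ N, r i a] {w : α → M}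
    (hw : ∀ a ∈ s, 0 ≤ w a) :
    ∑ a ∈ s with ∃ i ∈ N, r i a, w a ≤ ∑ i ∈ N, ∑ a ∈ s with r i a, w a := by
  simp only [sum_filter]
  rw [sum_comm]
  refine sum_le_sum fun a ha => ?_
  have hterm : ∀ i ∈ N, 0 ≤ if r i a then w a else 0 := fun i _ => by
    split_ifs
    exacts [hw a ha, le_rfl]
  split_ifs with h
  · obtain ⟨i, hi, hia⟩ := h
    simpa only [if_pos hia] using single_le_sum hterm hi
  · exact sum_nonneg hterm

noncomputable section

section Gibbs

variable {E : Type*}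

def gibbsWeight (θ : E → ℝ) (S : Finset E) : ℝ := Real.exp (∑ e ∈ S, θ e)

def partitionFn (𝓕 : Finset (Finset E)) (θ : E → ℝ) : ℝ := ∑ S ∈ 𝓕, gibbsWeight θ S

def gibbs [DecidableEq E] (𝓕 : Finset (Finset E)) (θ : E → ℝ) (S : Finset E) : ℝ :=
  if S ∈ 𝓕 then gibbsWeight θ S / partitionFn 𝓕 θ else 0

/-- The Lagrangian dual of maximising entropy over distributions on `𝓕` with marginals `p`:
its minimisers `θ` are the parameters of Gibbs distributions with these marginals. -/
def maxEntDual [Fintype E] (𝓕 : Finset (Finset E)) (p θ : E → ℝ) : ℝ :=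
  Real.log (partitionFn 𝓕 θ) - ∑ e, p e * θ e

variable {𝓕 : Finset (Finset E)} {θ : E → ℝ}

lemma gibbsWeight_pos (θ : E → ℝ) (S : Finset E) : 0 < gibbsWeight θ S := Real.exp_pos _

lemma gibbsWeight_insert [DecidableEq E] {e : E} {S : Finset E} (he : e ∉ S) :
    gibbsWeight θ (insert e S) = Real.exp (θ e) * gibbsWeight θ S := by
  rw [gibbsWeight, gibbsWeight, sum_insert he, Real.exp_add]

lemma gibbsWeight_add_single [DecidableEq E] (e : E) (t : ℝ) (S : Finset E) :
    gibbsWeight (θ + Pi.single e t) S = (if e ∈ S then Real.exp t else 1) * gibbsWeight θ S := by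
  rw [gibbsWeight, gibbsWeight, Pi.add_def, sum_add_distrib, sum_pi_single', Real.exp_add]
  split_ifs <;> simp [mul_comm]

lemma gibbsWeight_le_partitionFn {S : Finset E} (hS : S ∈ 𝓕) :
    gibbsWeight θ S ≤ partitionFn 𝓕 θ :=
  single_le_sum (fun T _ => (gibbsWeight_pos θ T).le) hS

lemma partitionFn_nonneg : 0 ≤ partitionFn 𝓕 θ :=
  sum_nonneg fun S _ => (gibbsWeight_pos θ S).le

lemma partitionFn_pos (h𝓕 : 𝓕.Nonempty) : 0 < partitionFn 𝓕 θ :=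
  sum_pos (fun S _ => gibbsWeight_pos θ S) h𝓕

lemma one_le_partitionFn (hempty : ∅ ∈ 𝓕) : 1 ≤ partitionFn 𝓕 θ := by
  simpa [gibbsWeight] using gibbsWeight_le_partitionFn (θ := θ) hempty

lemma partitionFn_add_single [DecidableEq E] (e : E) (t : ℝ) :
    partitionFn 𝓕 (θ + Pi.single e t) =
      Real.exp t * partitionFn {S ∈ 𝓕 | e ∈ S} θ + partitionFn {S ∈ 𝓕 | e ∉ S} θ := by
  rw [partitionFn, ← sum_filter_add_sum_filter_not 𝓕 (e ∈ ·), partitionFn, partitionFn,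
    mul_sum]
  congr 1 <;> refine sum_congr rfl fun S hS => ?_ <;> rw [gibbsWeight_add_single]
  · rw [if_pos (mem_filter.1 hS).2]
  · rw [if_neg (mem_filter.1 hS).2, one_mul]

lemma maxEntDual_add_single [Fintype E] [DecidableEq E] (p : E → ℝ) (e : E) (t : ℝ) :
    maxEntDual 𝓕 p (θ + Pi.single e t) =
      Real.log (Real.exp t * partitionFn {S ∈ 𝓕 | e ∈ S} θ + partitionFn {S ∈ 𝓕 | e ∉ S} θ)
        - (∑ f, p f * θ f + p e * t) := by
  rw [maxEntDual, partitionFn_add_single]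
  simp [mul_add, sum_add_distrib, Pi.single_apply]

lemma partitionFn_filter_mem_eq_of_forall_le [Fintype E] [DecidableEq E] {p : E → ℝ} {e : E}
    (h𝓕 : 𝓕.Nonempty) (hmin : ∀ t : ℝ, maxEntDual 𝓕 p θ ≤ maxEntDual 𝓕 p (θ + Pi.single e t)) :
    partitionFn {S ∈ 𝓕 | e ∈ S} θ = p e * partitionFn 𝓕 θ := by
  set A := partitionFn {S ∈ 𝓕 | e ∈ S} θ
  set B := partitionFn {S ∈ 𝓕 | e ∉ S} θ
  have hZ : partitionFn 𝓕 θ = A + B := by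
    simpa using partitionFn_add_single (𝓕 := 𝓕) (θ := θ) e 0
  have hZpos : 0 < A + B := hZ ▸ partitionFn_pos h𝓕
  have hloc : IsLocalMin (fun t => maxEntDual 𝓕 p (θ + Pi.single e t)) 0 :=
    Filter.Eventually.of_forall fun t => by simpa using hmin t
  have hderiv : HasDerivAt (fun t => maxEntDual 𝓕 p (θ + Pi.single e t)) (A / (A + B) - p e) 0 := by
    simp only [maxEntDual_add_single]
    have hZt : HasDerivAt (fun t => Real.exp t * A + B) A 0 := by
      simpa using ((Real.hasDerivAt_exp 0).mul_const A).add_const B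
    exact ((hZt.log (by simpa using hZpos.ne')).sub
      (((hasDerivAt_id' (0 : ℝ)).const_mul (p e)).const_add (∑ f, p f * θ f))).congr_deriv
      (by simp)
  have hcrit := hloc.hasDerivAt_eq_zero hderiv
  rw [hZ]
  field_simp at hcrit
  linarith

lemma continuous_maxEntDual [Fintype E] (h𝓕 : 𝓕.Nonempty) (p : E → ℝ) :
    Continuous (maxEntDual 𝓕 p) := by
  have hZ : Continuous (partitionFn 𝓕) := by unfold partitionFn gibbsWeight; fun_prop
  exact (hZ.log fun θ => (partitionFn_pos h𝓕).ne').sub (by fun_prop)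

lemma mul_sum_mul_abs_le_of_maxEntDual_le [Fintype E] {p : E → ℝ} {ε c : ℝ}
    (hempty : ∅ ∈ 𝓕) (hp : ∀ e, 0 ≤ p e) (hε : 0 < ε)
    (hcoer : ∃ S ∈ 𝓕, (1 + ε) * ∑ e, p e * max (θ e) 0 ≤ ∑ e ∈ S, θ e)
    (hc : maxEntDual 𝓕 p θ ≤ c) :
    ε * ∑ e, p e * |θ e| ≤ (2 + ε) * c := by
  obtain ⟨S, hS, hSθ⟩ := hcoer
  set L := Real.log (partitionFn 𝓕 θ)
  set pos := ∑ e, p e * max (θ e) 0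
  set lin := ∑ e, p e * θ e
  have hL : 0 ≤ L := Real.log_nonneg (one_le_partitionFn hempty)
  have hSL : ∑ e ∈ S, θ e ≤ L := by
    simpa [gibbsWeight] using Real.log_le_log (gibbsWeight_pos θ S) (gibbsWeight_le_partitionFn hS)
  have hlin : lin ≤ pos := sum_le_sum fun e _ => mul_le_mul_of_nonneg_left (le_max_left _ _) (hp e)
  have habs : ∑ e, p e * |θ e| = 2 * pos - lin := by
    rw [mul_sum, ← sum_sub_distrib]
    refine sum_congr rfl fun e _ => ?_
    rcases le_total 0 (θ e) with h | h
    · rw [abs_of_nonneg h, max_eq_left h]; ring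
    · rw [abs_of_nonpos h, max_eq_right h]; ring
  have hc' : L - lin ≤ c := hc
  have hpos : ε * pos ≤ c := by nlinarith
  rw [habs]
  nlinarith

theorem exists_forall_maxEntDual_le [Fintype E] {p : E → ℝ} {P : Finset E} {ε : ℝ}
    (hempty : ∅ ∈ 𝓕) (hp : ∀ e, 0 ≤ p e) (hpP : ∀ e ∈ P, 0 < p e) (hε : 0 < ε)
    (hcoer : ∀ θ : E → ℝ, (∀ e ∉ P, θ e = 0) →
      ∃ S ∈ 𝓕, (1 + ε) * ∑ e, p e * max (θ e) 0 ≤ ∑ e ∈ S, θ e) :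
    ∃ θ : E → ℝ, (∀ e ∉ P, θ e = 0) ∧
      ∀ θ' : E → ℝ, (∀ e ∉ P, θ' e = 0) → maxEntDual 𝓕 p θ ≤ maxEntDual 𝓕 p θ' := by
  set K : Set (E → ℝ) := {θ | ∀ e ∉ P, θ e = 0}
  set D := maxEntDual 𝓕 p
  have hD : Continuous D := continuous_maxEntDual ⟨∅, hempty⟩ p
  set c := D 0
  have hc : 0 ≤ c := by
    simpa [c, D, maxEntDual] using Real.log_nonneg (one_le_partitionFn (θ := 0) hempty)
  set R := (2 + ε) * c / ε
  have hbox : K ∩ {θ | D θ ≤ c} ⊆ Set.univ.pi fun e => Set.Icc (-(R / p e)) (R / p e) := by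
    rintro θ ⟨hθK, hθc⟩ e -
    rw [Set.mem_Icc, ← abs_le]
    by_cases he : e ∈ P
    · have hsum := mul_sum_mul_abs_le_of_maxEntDual_le hempty hp hε (hcoer θ hθK) hθc
      have hterm : p e * |θ e| ≤ ∑ f, p f * |θ f| :=
        single_le_sum (fun f _ => mul_nonneg (hp f) (abs_nonneg _)) (mem_univ e)
      rw [le_div_iff₀ (hpP e he), le_div_iff₀ hε]
      nlinarith
    · rw [hθK e he, abs_zero]
      exact div_nonneg (by positivity) (hp e)
  have hK : IsClosed K := by
    simp only [K, Set.ofPred_forall]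
    exact isClosed_iInter fun e => isClosed_iInter fun _ =>
      isClosed_eq (continuous_apply e) continuous_const
  have hcpt : IsCompact (K ∩ {θ | D θ ≤ c}) :=
    (isCompact_univ_pi fun e => isCompact_Icc).of_isClosed_subset
      (hK.inter (isClosed_le hD continuous_const)) hbox
  have h0 : (0 : E → ℝ) ∈ K ∩ {θ | D θ ≤ c} := ⟨fun _ _ => rfl, show D 0 ≤ c from le_rfl⟩
  obtain ⟨θ, ⟨hθK, -⟩, hθmin⟩ := hcpt.exists_isMinOn ⟨0, h0⟩ hD.continuousOn
  refine ⟨θ, hθK, fun θ' hθ' => ?_⟩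
  by_cases h : D θ' ≤ c
  · exact hθmin ⟨hθ', h⟩
  · exact (hθmin h0).trans (not_le.1 h).le

lemma partitionFn_filter_mem_eq_of_isMin [Fintype E] [DecidableEq E] {p : E → ℝ}
    {P : Finset E} (h𝓕 : 𝓕.Nonempty) (hsub : ∀ S ∈ 𝓕, S ⊆ P) (hpP : ∀ e ∉ P, p e = 0)
    (hθ : ∀ e ∉ P, θ e = 0)
    (hmin : ∀ θ' : E → ℝ, (∀ e ∉ P, θ' e = 0) → maxEntDual 𝓕 p θ ≤ maxEntDual 𝓕 p θ')
    (e : E) : partitionFn {S ∈ 𝓕 | e ∈ S} θ = p e * partitionFn 𝓕 θ := by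
  by_cases he : e ∈ P
  · refine partitionFn_filter_mem_eq_of_forall_le h𝓕 fun t => hmin _ fun f hf => ?_
    rw [Pi.add_apply, hθ f hf, Pi.single_eq_of_ne (ne_of_mem_of_not_mem he hf).symm, add_zero]
  · have hempty : {S ∈ 𝓕 | e ∈ S} = ∅ := filter_eq_empty_iff.2 fun S hS heS => he (hsub S hS heS)
    rw [hempty, hpP e he, zero_mul, partitionFn, sum_empty]

lemma partitionFn_sub_partitionFn_filter_disjoint_le [DecidableEq E] (𝓕 : Finset (Finset E))
    (θ : E → ℝ) (N : Finset E) :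
    partitionFn 𝓕 θ - partitionFn {S ∈ 𝓕 | Disjoint N S} θ ≤
      ∑ f ∈ N, partitionFn {S ∈ 𝓕 | f ∈ S} θ := by
  rw [partitionFn, ← sum_filter_add_sum_filter_not 𝓕 (Disjoint N), partitionFn,
    add_sub_cancel_left]
  simp only [not_disjoint_iff]
  exact sum_filter_exists_le _ _ _ fun S _ => (gibbsWeight_pos θ S).le

section Distribution

variable [DecidableEq E]

lemma gibbs_nonneg (𝓕 : Finset (Finset E)) (θ : E → ℝ) (S : Finset E) : 0 ≤ gibbs 𝓕 θ S := by
  unfold gibbs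
  split_ifs
  exacts [div_nonneg (gibbsWeight_pos θ S).le partitionFn_nonneg, le_rfl]

lemma mem_of_gibbs_ne_zero {S : Finset E} (hS : gibbs 𝓕 θ S ≠ 0) : S ∈ 𝓕 := by
  by_contra h
  exact hS (if_neg h)

lemma sum_gibbs [Fintype E] (h𝓕 : 𝓕.Nonempty) : ∑ S, gibbs 𝓕 θ S = 1 := by
  simp only [gibbs]
  rw [sum_ite_mem, univ_inter, ← sum_div, ← partitionFn, div_self (partitionFn_pos h𝓕).ne']

lemma sum_filter_gibbs [Fintype E] (q : Finset E → Prop) [DecidablePred q] :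
    ∑ S ∈ univ.filter q, gibbs 𝓕 θ S = partitionFn {S ∈ 𝓕 | q S} θ / partitionFn 𝓕 θ := by
  simp only [gibbs, partitionFn, sum_div]
  rw [sum_ite_mem, filter_inter, univ_inter]

lemma gibbs_insert_div_le {e : E} {T : Finset E} {q : ℝ}
    (hdown : ∀ S ∈ 𝓕, ∀ T ⊆ S, T ∈ 𝓕) (heT : e ∉ T) (hq : 0 ≤ q)
    (hexp : insert e T ∈ 𝓕 → Real.exp (θ e) ≤ q) :
    gibbs 𝓕 θ (insert e T) / (gibbs 𝓕 θ T + gibbs 𝓕 θ (insert e T)) ≤ q := by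
  by_cases hins : insert e T ∈ 𝓕
  · have hT : T ∈ 𝓕 := hdown _ hins T (subset_insert e T)
    have hgibbs : gibbs 𝓕 θ (insert e T) = Real.exp (θ e) * gibbs 𝓕 θ T := by
      rw [gibbs, gibbs, if_pos hins, if_pos hT, gibbsWeight_insert heT, mul_div_assoc]
    have hpos : 0 < gibbs 𝓕 θ T := by
      rw [gibbs, if_pos hT]
      exact div_pos (gibbsWeight_pos θ T) (partitionFn_pos ⟨T, hT⟩)
    have hexp_pos := Real.exp_pos (θ e)
    calc gibbs 𝓕 θ (insert e T) / (gibbs 𝓕 θ T + gibbs 𝓕 θ (insert e T))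
        = Real.exp (θ e) / (1 + Real.exp (θ e)) := by
          rw [hgibbs]
          field_simp
      _ ≤ Real.exp (θ e) := div_le_self hexp_pos.le (by linarith)
      _ ≤ q := hexp hins
  · rw [gibbs, if_neg hins, zero_div]
    exact hq

end Distribution

end Gibbs

section Matching

variable {V E : Type*} [DecidableEq V] {ends : E → Finset V}

lemma isMatching_empty : IsMatching ends ∅ := by simp [IsMatching]

lemma IsMatching.subset {S T : Finset E} (hS : IsMatching ends S) (hTS : T ⊆ S) :
    IsMatching ends T :=
  fun e he f hf hef => hS e (hTS he) f (hTS hf) hef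

lemma IsMatching.insert [DecidableEq E] {S : Finset E} {e : E} (hS : IsMatching ends S)
    (he : ∀ f ∈ S, Disjoint (ends f) (ends e)) : IsMatching ends (insert e S) := by
  intro a ha b hb hab
  rcases mem_insert.1 ha with rfl | ha' <;> rcases mem_insert.1 hb with rfl | hb'
  · exact absurd rfl hab
  · exact (he b hb').symm
  · exact he a ha'
  · exact hS a ha' b hb' hab

variable [Fintype E]

variable (ends) in
def edgeNbhd (e : E) : Finset E := {f | ¬Disjoint (ends f) (ends e)}

lemma mem_edgeNbhd {e f : E} : f ∈ edgeNbhd ends e ↔ ¬Disjoint (ends f) (ends e) := by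
  simp [edgeNbhd]

lemma mem_edgeNbhd_self {e : E} (he : (ends e).Nonempty) : e ∈ edgeNbhd ends e := by
  simpa [mem_edgeNbhd] using he.ne_empty

lemma sum_edgeNbhd_le_card {x : E → ℝ} (hx : ∀ f, 0 ≤ x f)
    (hdeg : ∀ v : V, ∑ f ∈ univ.filter (fun f => v ∈ ends f), x f ≤ 1) (e : E) :
    ∑ f ∈ edgeNbhd ends e, x f ≤ (ends e).card := by
  have hnbhd : edgeNbhd ends e = ({f | ∃ v ∈ ends e, v ∈ ends f} : Finset E) := by
    ext f
    simp [edgeNbhd, not_disjoint_iff, and_comm]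
  calc ∑ f ∈ edgeNbhd ends e, x f
      ≤ ∑ v ∈ ends e, ∑ f ∈ univ.filter (fun f => v ∈ ends f), x f := by
        rw [hnbhd]
        exact sum_filter_exists_le _ _ _ fun f _ => hx f
    _ ≤ ∑ v ∈ ends e, (1 : ℝ) := sum_le_sum fun v _ => hdeg v
    _ = (ends e).card := by simp

variable (ends) in
open Classical in
def matchingsIn (P : Finset E) : Finset (Finset E) := {S | IsMatching ends S ∧ S ⊆ P}

lemma mem_matchingsIn {P S : Finset E} : S ∈ matchingsIn ends P ↔ IsMatching ends S ∧ S ⊆ P := by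
  simp [matchingsIn]

lemma empty_mem_matchingsIn (P : Finset E) : ∅ ∈ matchingsIn ends P :=
  mem_matchingsIn.2 ⟨isMatching_empty, empty_subset P⟩

lemma mem_matchingsIn_of_subset {P S T : Finset E} (hS : S ∈ matchingsIn ends P) (hTS : T ⊆ S) :
    T ∈ matchingsIn ends P :=
  mem_matchingsIn.2 ⟨(mem_matchingsIn.1 hS).1.subset hTS, hTS.trans (mem_matchingsIn.1 hS).2⟩

/-- Greedy selection: repeatedly take a remaining edge `e` of largest positive `θ e` and discard
its neighbourhood, whose `x`-weight is at most `k`. -/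
theorem exists_isMatching_sum_mul_max_le [DecidableEq E] {k : ℕ} (hk : ∀ e, (ends e).card ≤ k)
    (hne : ∀ e, (ends e).Nonempty) {x : E → ℝ} (hx : ∀ f, 0 ≤ x f)
    (hdeg : ∀ v : V, ∑ f ∈ univ.filter (fun f => v ∈ ends f), x f ≤ 1) (θ : E → ℝ)
    (F : Finset E) :
    ∃ S ⊆ F, IsMatching ends S ∧ (∀ f ∈ S, 0 < θ f) ∧
      ∑ e ∈ F, x e * max (θ e) 0 ≤ k * ∑ f ∈ S, θ f := by
  induction F using Finset.strongInduction with
  | _ F ih =>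
  by_cases hF : (F.filter (0 < θ ·)).Nonempty
  · obtain ⟨e, he, hemax⟩ := exists_max_image _ θ hF
    obtain ⟨heF, hθe⟩ := mem_filter.1 he
    have hlt : F \ edgeNbhd ends e ⊂ F := (ssubset_iff_of_subset sdiff_subset).2
      ⟨e, heF, fun h => (mem_sdiff.1 h).2 (mem_edgeNbhd_self (hne e))⟩
    obtain ⟨S, hSF, hS, hSθ, hsum⟩ := ih _ hlt
    have hSe : ∀ f ∈ S, Disjoint (ends f) (ends e) := fun f hf => by
      simpa [mem_edgeNbhd] using (mem_sdiff.1 (hSF hf)).2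
    have heS : e ∉ S := fun h => (mem_sdiff.1 (hSF h)).2 (mem_edgeNbhd_self (hne e))
    have hnbhd : ∑ f ∈ F ∩ edgeNbhd ends e, x f * max (θ f) 0 ≤ k * θ e :=
      calc ∑ f ∈ F ∩ edgeNbhd ends e, x f * max (θ f) 0
          ≤ ∑ f ∈ F ∩ edgeNbhd ends e, x f * θ e := by
            refine sum_le_sum fun f hf => mul_le_mul_of_nonneg_left (max_le ?_ hθe.le) (hx f)
            by_contra! h
            exact not_le.2 h (hemax f (mem_filter.2 ⟨(mem_inter.1 hf).1, hθe.trans h⟩))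
        _ ≤ ∑ f ∈ edgeNbhd ends e, x f * θ e :=
            sum_le_sum_of_subset_of_nonneg inter_subset_right
              fun f _ _ => mul_nonneg (hx f) hθe.le
        _ = (∑ f ∈ edgeNbhd ends e, x f) * θ e := by rw [sum_mul]
        _ ≤ k * θ e := by
            gcongr
            exact (sum_edgeNbhd_le_card hx hdeg e).trans (by exact_mod_cast hk e)
    refine ⟨insert e S, insert_subset heF (hSF.trans sdiff_subset), hS.insert hSe, ?_, ?_⟩
    · simpa [hθe] using hSθ
    · rw [← sum_inter_add_sum_sdiff F (edgeNbhd ends e), sum_insert heS, mul_add]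
      linarith
  · refine ⟨∅, empty_subset F, isMatching_empty, by simp, ?_⟩
    rw [sum_empty, mul_zero]
    refine (sum_eq_zero fun f hf => ?_).le
    rw [max_eq_right (not_lt.1 fun h => hF ⟨f, mem_filter.2 ⟨hf, h⟩⟩), mul_zero]

lemma exists_mem_matchingsIn_sum_mul_max_le [DecidableEq E] (hcard : ∀ e, (ends e).card ≤ 2)
    (hne : ∀ e, (ends e).Nonempty) {x : E → ℝ} (hx : ∀ f, 0 ≤ x f)
    (hdeg : ∀ v : V, ∑ f ∈ univ.filter (fun f => v ∈ ends f), x f ≤ 1) {P : Finset E}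
    {θ : E → ℝ} (hθ : ∀ e ∉ P, θ e = 0) :
    ∃ S ∈ matchingsIn ends P, (1 + 1 / 2) * ∑ e, x e / 3 * max (θ e) 0 ≤ ∑ e ∈ S, θ e := by
  obtain ⟨S, -, hS, hSθ, hsum⟩ := exists_isMatching_sum_mul_max_le hcard hne hx hdeg θ univ
  refine ⟨S, mem_matchingsIn.2 ⟨hS, fun f hf => ?_⟩, ?_⟩
  · by_contra hfP
    exact (hSθ f hf).ne' (hθ f hfP)
  · simp only [div_mul_eq_mul_div, ← sum_div]
    push_cast at hsum
    linarith

/-- Deleting `e` is a bijection from the matchings containing `e` onto those avoiding its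
neighbourhood. -/
lemma partitionFn_filter_mem_matchingsIn [DecidableEq E] (hne : ∀ e, (ends e).Nonempty)
    {P : Finset E} {e : E} (heP : e ∈ P) (θ : E → ℝ) :
    partitionFn {S ∈ matchingsIn ends P | e ∈ S} θ =
      Real.exp (θ e) * partitionFn {S ∈ matchingsIn ends P | Disjoint (edgeNbhd ends e) S} θ := by
  have he : e ∈ edgeNbhd ends e := mem_edgeNbhd_self (hne e)
  rw [partitionFn, partitionFn, mul_sum]
  refine sum_nbij' (·.erase e) (insert e) (fun S hS => ?_) (fun S hS => ?_) (fun S hS => ?_)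
    (fun S hS => ?_) (fun S hS => ?_)
  · obtain ⟨hSM, heS⟩ := mem_filter.1 hS
    refine mem_filter.2 ⟨mem_matchingsIn_of_subset hSM (erase_subset e S), disjoint_right.2 ?_⟩
    intro f hf
    rw [mem_edgeNbhd, not_not]
    exact (mem_matchingsIn.1 hSM).1 f (mem_of_mem_erase hf) e heS (ne_of_mem_erase hf)
  · obtain ⟨hSM, hNS⟩ := mem_filter.1 hS
    obtain ⟨hS, hSP⟩ := mem_matchingsIn.1 hSM
    have hSe : ∀ f ∈ S, Disjoint (ends f) (ends e) := fun f hf =>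
      not_not.1 (mem_edgeNbhd.not.1 (disjoint_right.1 hNS hf))
    exact mem_filter.2 ⟨mem_matchingsIn.2 ⟨hS.insert hSe, insert_subset heP hSP⟩, mem_insert_self e S⟩
  · exact insert_erase (mem_filter.1 hS).2
  · exact erase_insert (disjoint_left.1 (mem_filter.1 hS).2 he)
  · rw [← gibbsWeight_insert (notMem_erase e S), insert_erase (mem_filter.1 hS).2]

theorem exp_le_of_partitionFn_filter_mem_eq [DecidableEq E] (hcard : ∀ e, (ends e).card ≤ 2)
    (hne : ∀ e, (ends e).Nonempty) {x : E → ℝ} (hx : ∀ f, 0 ≤ x f)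
    (hdeg : ∀ v : V, ∑ f ∈ univ.filter (fun f => v ∈ ends f), x f ≤ 1) {P : Finset E}
    {θ : E → ℝ} (hmarg : ∀ f, partitionFn {S ∈ matchingsIn ends P | f ∈ S} θ =
      x f / 3 * partitionFn (matchingsIn ends P) θ) {e : E} (heP : e ∈ P) :
    Real.exp (θ e) ≤ x e := by
  set Z := partitionFn (matchingsIn ends P) θ
  set Ze := partitionFn {S ∈ matchingsIn ends P | Disjoint (edgeNbhd ends e) S} θ
  have hZe_pos : 0 < Ze :=
    partitionFn_pos ⟨∅, mem_filter.2 ⟨empty_mem_matchingsIn P, disjoint_empty_right _⟩⟩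
  have hZ : Z ≤ 3 * Ze := by
    have hunion := partitionFn_sub_partitionFn_filter_disjoint_le (matchingsIn ends P) θ
      (edgeNbhd ends e)
    have hN : ∑ f ∈ edgeNbhd ends e, x f ≤ 2 :=
      (sum_edgeNbhd_le_card hx hdeg e).trans (by exact_mod_cast hcard e)
    simp only [hmarg, ← sum_mul] at hunion
    rw [← sum_div] at hunion
    nlinarith [partitionFn_nonneg (𝓕 := matchingsIn ends P) (θ := θ)]
  have hA : Real.exp (θ e) * Ze = x e / 3 * Z :=
    (partitionFn_filter_mem_matchingsIn hne heP θ).symm.trans (hmarg e)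
  refine le_of_mul_le_mul_right ?_ hZe_pos
  rw [hA]
  nlinarith [hx e]

end Matching

end

theorem stmt_1_general
    {V E : Type*} [Fintype V] [Fintype E] [DecidableEq V] [DecidableEq E]
    -- a finite simple graph, with edge set `E` and endpoint map `ends`
    (ends : E → Finset V)
    (hsimple₁ : ∀ e, (ends e).card = 2)
    (x : E → ℝ) (hx : ∀ e, 0 ≤ x e ∧ x e ≤ 1)
    (hdeg : ∀ v : V, ∑ e ∈ univ.filter (fun e => v ∈ ends e), x e ≤ 1) :
    ∃ μ : Finset E → ℝ,
      (∀ S, 0 ≤ μ S) ∧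
      (∑ S : Finset E, μ S) = 1 ∧
      (∀ S, μ S ≠ 0 → IsMatching ends S) ∧
      -- (i) selectability with factor 1/3
      (∀ e, ∑ S ∈ univ.filter (fun S => e ∈ S), μ S = x e / 3) ∧
      -- (ii) stationary implementability
      (∀ e : E, ∀ T : Finset E, IsMatching ends T → e ∉ T →
        0 < μ T + μ (insert e T) →
        μ (insert e T) / (μ T + μ (insert e T)) ≤ x e) := by
  have hx0 : ∀ e, 0 ≤ x e := fun e => (hx e).1
  have hcard : ∀ e, (ends e).card ≤ 2 := fun e => (hsimple₁ e).le
  have hne : ∀ e, (ends e).Nonempty := fun e => card_pos.1 (by rw [hsimple₁ e]; norm_num)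
  set P : Finset E := {e | 0 < x e}
  set 𝓜 := matchingsIn ends P
  have h𝓜 : 𝓜.Nonempty := ⟨∅, empty_mem_matchingsIn P⟩
  obtain ⟨θ, hθP, hθmin⟩ := exists_forall_maxEntDual_le (𝓕 := 𝓜) (p := fun e => x e / 3)
    (P := P) (ε := 1 / 2) (empty_mem_matchingsIn P) (fun e => div_nonneg (hx0 e) zero_le_three)
    (fun e he => by simpa [P] using he) (by norm_num)
    fun θ hθ => exists_mem_matchingsIn_sum_mul_max_le hcard hne hx0 hdeg hθ
  have hmarg : ∀ f, partitionFn {S ∈ 𝓜 | f ∈ S} θ = x f / 3 * partitionFn 𝓜 θ :=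
    partitionFn_filter_mem_eq_of_isMin h𝓜 (fun S hS => (mem_matchingsIn.1 hS).2)
      (fun f hf => by simp [le_antisymm (not_lt.1 (by simpa [P] using hf)) (hx0 f)]) hθP hθmin
  refine ⟨gibbs 𝓜 θ, gibbs_nonneg 𝓜 θ, sum_gibbs h𝓜,
    fun S hS => (mem_matchingsIn.1 (mem_of_gibbs_ne_zero hS)).1, fun e => ?_,
    fun e T _ heT _ => gibbs_insert_div_le (fun S hS T hTS => mem_matchingsIn_of_subset hS hTS) heT
      (hx0 e) fun h => exp_le_of_partitionFn_filter_mem_eq hcard hne hx0 hdeg hmarg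
        ((mem_matchingsIn.1 h).2 (mem_insert_self e T))⟩
  rw [sum_filter_gibbs, hmarg, mul_div_cancel_right₀ _ (partitionFn_pos h𝓜).ne']

theorem stmt_1
    {V E : Type*} [Fintype V] [Fintype E] [DecidableEq V] [DecidableEq E]
    -- a finite simple graph, with edge set `E` and endpoint map `ends`
    (ends : E → Finset V)
    (hsimple₁ : ∀ e, (ends e).card = 2)
    (hsimple₂ : Function.Injective ends)
    (x : E → ℝ) (hx : ∀ e, 0 ≤ x e ∧ x e ≤ 1)
    (hdeg : ∀ v : V, ∑ e ∈ univ.filter (fun e => v ∈ ends e), x e ≤ 1) :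
    ∃ μ : Finset E → ℝ,
      (∀ S, 0 ≤ μ S) ∧
      (∑ S : Finset E, μ S) = 1 ∧
      (∀ S, μ S ≠ 0 → IsMatching ends S) ∧
      -- (i) selectability with factor 1/3
      (∀ e, ∑ S ∈ univ.filter (fun S => e ∈ S), μ S = x e / 3) ∧
      -- (ii) stationary implementability
      (∀ e : E, ∀ T : Finset E, IsMatching ends T → e ∉ T →
        0 < μ T + μ (insert e T) →
        μ (insert e T) / (μ T + μ (insert e T)) ≤ x e) :=
  stmt_1_general ends hsimple₁ x hx hdeg
end

section
/- Let G = (U ∪ V, E) be a finite bipartite graph with positive edge weights w_e > 0. For a subgraph H of G, define the matching partition function Z(H) = Σ_{M matching of H} ∏_{e∈M} w_e (the empty matching contributing 1). Then for every u ∈ U and v ∈ V, Z(G) · Z(G−u−v) ≥ Z(G−u) · Z(G−v), where G−z denotes the graph obtained from G by deleting vertex z and all edges incident to it, and G−u−v denotes deleting both u and v. -/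
open Finset

/-!
Expanding over the edge that a matching uses at a vertex `a` gives
`Z(G) = Z(G−a) + ∑_{e ∋ a} w_e Z(G − both ends of e)`. Expanding `Z(G)` and `Z(G−v)` at `u ∈ U`
reduces `Z(G−u) Z(G−v) ≤ Z(G) Z(G−u−v)` termwise to the same-side inequality
`Z(H) Z(H−a−b) ≤ Z(H−a) Z(H−b)` for `H = G−u` and `a ≠ b` in `V`; expanding at `a` reduces that
one termwise to the opposite-side inequality for `G−a`. Both therefore follow together by strong
induction on the edge set.
-/

/-- `S` is a matching of the bipartite graph whose edge `e` joins `eu e ∈ U` to `ev e ∈ V`: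
no two distinct edges of `S` share an endpoint. -/
def IsBipMatching {U V E : Type*} (eu : E → U) (ev : E → V) (S : Finset E) : Prop :=
  ∀ e ∈ S, ∀ f ∈ S, e ≠ f → eu e ≠ eu f ∧ ev e ≠ ev f

instance {U V E : Type*} [DecidableEq U] [DecidableEq V] [DecidableEq E]
    (eu : E → U) (ev : E → V) (S : Finset E) : Decidable (IsBipMatching eu ev S) :=
  inferInstanceAs (Decidable (∀ e ∈ S, ∀ f ∈ S, e ≠ f → eu e ≠ eu f ∧ ev e ≠ ev f))

section MatchingPartition

variable {U V E : Type*}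

theorem isBipMatching_comm (eu : E → U) (ev : E → V) (S : Finset E) :
    IsBipMatching eu ev S ↔ IsBipMatching ev eu S :=
  ⟨fun h e he f hf hef => (h e he f hf hef).symm, fun h e he f hf hef => (h e he f hf hef).symm⟩

theorem isBipMatching_insert_iff [DecidableEq E] (eu : E → U) (ev : E → V) {e : E} {S : Finset E}
    (he : e ∉ S) :
    IsBipMatching eu ev (insert e S) ↔
      IsBipMatching eu ev S ∧ ∀ f ∈ S, eu f ≠ eu e ∧ ev f ≠ ev e := by
  refine ⟨fun h => ⟨fun f hf g hg => h f (mem_insert_of_mem hf) g (mem_insert_of_mem hg),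
    fun f hf => h f (mem_insert_of_mem hf) e (mem_insert_self e S) (ne_of_mem_of_not_mem hf he)⟩,
    fun ⟨hS, hSe⟩ f hf g hg hfg => ?_⟩
  rcases mem_insert.1 hf with rfl | hfS <;> rcases mem_insert.1 hg with rfl | hgS
  · exact absurd rfl hfg
  · exact (hSe g hgS).imp Ne.symm Ne.symm
  · exact hSe f hfS
  · exact hS f hfS g hgS hfg

variable [DecidableEq U] [DecidableEq V] [DecidableEq E] (eu : E → U) (ev : E → V) (w : E → ℝ)

def bipMatchings (A : Finset E) : Finset (Finset E) :=
  A.powerset.filter (IsBipMatching eu ev)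

def matchingPartition (A : Finset E) : ℝ :=
  ∑ S ∈ bipMatchings eu ev A, ∏ e ∈ S, w e

local notation "Z" => matchingPartition eu ev w

variable {eu ev} in
theorem mem_bipMatchings {A S : Finset E} :
    S ∈ bipMatchings eu ev A ↔ S ⊆ A ∧ IsBipMatching eu ev S := by
  rw [bipMatchings, mem_filter, mem_powerset]

theorem matchingPartition_comm (A : Finset E) : Z A = matchingPartition ev eu w A := by
  simp only [matchingPartition, bipMatchings, isBipMatching_comm eu ev]

theorem matchingPartition_nonneg (hw : ∀ e, 0 ≤ w e) (A : Finset E) : 0 ≤ Z A :=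
  sum_nonneg fun _ _ => prod_nonneg fun e _ => hw e

theorem sum_bipMatchings_of_mem {A : Finset E} {e : E} (he : e ∈ A) :
    ∑ S ∈ (bipMatchings eu ev A).filter (e ∈ ·), ∏ f ∈ S, w f =
      w e * Z (A.filter fun f => eu f ≠ eu e ∧ ev f ≠ ev e) := by
  have not_mem {S : Finset E} (hS : S ∈ bipMatchings eu ev
      (A.filter fun f => eu f ≠ eu e ∧ ev f ≠ ev e)) : e ∉ S := fun heS =>
    ((mem_filter.1 ((mem_bipMatchings.1 hS).1 heS)).2.1 rfl)
  rw [matchingPartition, mul_sum]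
  refine (sum_nbij' (insert e) (erase · e) (fun S hS => ?_) (fun T hT => ?_)
    (fun S hS => erase_insert (not_mem hS)) (fun T hT => insert_erase (mem_filter.1 hT).2)
    (fun S hS => (prod_insert (not_mem hS)).symm)).symm
  · obtain ⟨hSA, hSm⟩ := mem_bipMatchings.1 hS
    refine mem_filter.2 ⟨mem_bipMatchings.2 ⟨insert_subset he (hSA.trans (filter_subset _ _)),
      (isBipMatching_insert_iff eu ev (not_mem hS)).2 ⟨hSm, fun f hf => (mem_filter.1 (hSA hf)).2⟩⟩,
      mem_insert_self e S⟩
  · obtain ⟨hT, heT⟩ := mem_filter.1 hT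
    obtain ⟨hTA, hT⟩ := mem_bipMatchings.1 hT
    rw [← insert_erase heT, isBipMatching_insert_iff eu ev (notMem_erase e T)] at hT
    exact mem_bipMatchings.2 ⟨fun f hf => mem_filter.2 ⟨hTA (mem_of_mem_erase hf), hT.2 f hf⟩, hT.1⟩

theorem matchingPartition_eq_add_sum_left (B : Finset E) (u : U) :
    Z B = Z (B.filter (eu · ≠ u)) +
      ∑ e ∈ B.filter (eu · = u), w e * Z ((B.filter (eu · ≠ u)).filter (ev · ≠ ev e)) := by
  have avoiding : (bipMatchings eu ev B).filter (fun S => ∀ f ∈ S, eu f ≠ u) =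
      bipMatchings eu ev (B.filter (eu · ≠ u)) := by
    ext S
    simp only [mem_filter, mem_bipMatchings, subset_iff]
    grind
  have touching : (bipMatchings eu ev B).filter (fun S => ¬ ∀ f ∈ S, eu f ≠ u) =
      (B.filter (eu · = u)).biUnion fun e => (bipMatchings eu ev B).filter (e ∈ ·) := by
    ext S
    simp only [mem_filter, mem_biUnion, mem_bipMatchings]
    grind
  have disjoint : (B.filter (eu · = u) : Set E).PairwiseDisjoint
      fun e => (bipMatchings eu ev B).filter (e ∈ ·) := by
    intro e he f hf hef
    refine disjoint_left.2 fun S hSe hSf => ?_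
    simp only [coe_filter, Set.mem_ofPred_eq] at he hf
    exact ((mem_bipMatchings.1 (mem_filter.1 hSe).1).2 e (mem_filter.1 hSe).2 f
      (mem_filter.1 hSf).2 hef).1 (he.2.trans hf.2.symm)
  rw [matchingPartition, ← sum_filter_add_sum_filter_not _ (fun S => ∀ f ∈ S, eu f ≠ u), avoiding,
    touching, sum_biUnion disjoint]
  refine congrArg _ (sum_congr rfl fun e he => ?_)
  rw [sum_bipMatchings_of_mem eu ev w (mem_filter.1 he).1, filter_filter, (mem_filter.1 he).2]

theorem matchingPartition_eq_add_sum_right (B : Finset E) (v : V) :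
    Z B = Z (B.filter (ev · ≠ v)) +
      ∑ e ∈ B.filter (ev · = v), w e * Z ((B.filter (ev · ≠ v)).filter (eu · ≠ eu e)) := by
  rw [matchingPartition_comm, matchingPartition_eq_add_sum_left ev eu w B v]
  simp only [matchingPartition_comm ev eu w]

variable {w}

theorem matchingPartition_opposite_le_of_sameSide_le (hw : ∀ e, 0 ≤ w e) (A : Finset E)
    (u : U) (v : V)
    (h : ∀ e ∈ A, eu e = u → ev e ≠ v →
      Z (A.filter (eu · ≠ u)) * Z (((A.filter (eu · ≠ u)).filter (ev · ≠ ev e)).filter (ev · ≠ v)) ≤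
        Z ((A.filter (eu · ≠ u)).filter (ev · ≠ ev e)) *
          Z ((A.filter (eu · ≠ u)).filter (ev · ≠ v))) :
    Z (A.filter (eu · ≠ u)) * Z (A.filter (ev · ≠ v)) ≤
      Z A * Z ((A.filter (eu · ≠ u)).filter (ev · ≠ v)) := by
  rw [matchingPartition_eq_add_sum_left eu ev w A u,
    matchingPartition_eq_add_sum_left eu ev w (A.filter (ev · ≠ v)) u,
    filter_comm (ev · ≠ v) (eu · ≠ u), filter_comm (ev · ≠ v) (eu · = u), sum_filter, mul_add,
    add_mul, mul_sum, sum_mul]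
  refine add_le_add le_rfl (sum_le_sum fun e he => ?_)
  obtain ⟨heA, heu⟩ := mem_filter.1 he
  split_ifs with hev
  · rw [filter_comm (ev · ≠ v)]
    linear_combination mul_le_mul_of_nonneg_left (h e heA heu hev) (hw e)
  · rw [mul_zero]
    exact mul_nonneg (mul_nonneg (hw e) (matchingPartition_nonneg eu ev w hw _))
      (matchingPartition_nonneg eu ev w hw _)

theorem matchingPartition_sameSide_le_of_opposite_le (hw : ∀ e, 0 ≤ w e) (A : Finset E)
    {a b : V} (hab : a ≠ b)
    (h : ∀ e ∈ A, ev e = a →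
      Z ((A.filter (ev · ≠ a)).filter (eu · ≠ eu e)) * Z ((A.filter (ev · ≠ a)).filter (ev · ≠ b)) ≤
        Z (A.filter (ev · ≠ a)) *
          Z (((A.filter (ev · ≠ a)).filter (eu · ≠ eu e)).filter (ev · ≠ b))) :
    Z A * Z ((A.filter (ev · ≠ a)).filter (ev · ≠ b)) ≤
      Z (A.filter (ev · ≠ a)) * Z (A.filter (ev · ≠ b)) := by
  have edges_at_a : (A.filter (ev · = a)).filter (ev · ≠ b) = A.filter (ev · = a) :=
    filter_true_of_mem fun e he => (mem_filter.1 he).2 ▸ hab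
  rw [matchingPartition_eq_add_sum_right eu ev w A a,
    matchingPartition_eq_add_sum_right eu ev w (A.filter (ev · ≠ b)) a,
    filter_comm (ev · ≠ b) (ev · ≠ a), filter_comm (ev · ≠ b) (ev · = a), edges_at_a, add_mul,
    mul_add, sum_mul, mul_sum]
  refine add_le_add le_rfl (sum_le_sum fun e he => ?_)
  obtain ⟨heA, hea⟩ := mem_filter.1 he
  rw [filter_comm (ev · ≠ b)]
  linear_combination mul_le_mul_of_nonneg_left (h e heA hea) (hw e)

theorem matchingPartition_opposite_le_and_sameSide_le (hw : ∀ e, 0 ≤ w e) (A : Finset E) :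
    (∀ (u : U) (v : V), Z (A.filter (eu · ≠ u)) * Z (A.filter (ev · ≠ v)) ≤
      Z A * Z ((A.filter (eu · ≠ u)).filter (ev · ≠ v))) ∧
    (∀ a b : V, a ≠ b → Z A * Z ((A.filter (ev · ≠ a)).filter (ev · ≠ b)) ≤
      Z (A.filter (ev · ≠ a)) * Z (A.filter (ev · ≠ b))) := by
  induction A using strongInduction with
  | H A ih =>
    refine ⟨fun u v => matchingPartition_opposite_le_of_sameSide_le eu ev hw A u v
      fun e he heu hev => ?_,
      fun a b hab => matchingPartition_sameSide_le_of_opposite_le eu ev hw A hab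
      fun e he hea => ?_⟩
    · exact (ih _ (filter_ssubset.2 ⟨e, he, not_not.2 heu⟩)).2 _ _ hev
    · exact (ih _ (filter_ssubset.2 ⟨e, he, not_not.2 hea⟩)).1 _ _

end MatchingPartition

theorem stmt_4_general
    {U V E : Type*} [Fintype E]
    [DecidableEq U] [DecidableEq V] [DecidableEq E]
    -- a finite simple bipartite graph
    (eu : E → U) (ev : E → V)
    (w : E → ℝ) (hw : ∀ e, 0 < w e)
    (u : U) (v : V)
    -- Z A = matching partition function of the subgraph with edge set A
    (Z : Finset E → ℝ)
    (hZ : ∀ A : Finset E,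
      Z A = ∑ S ∈ A.powerset.filter (fun S => IsBipMatching eu ev S), ∏ e ∈ S, w e) :
    -- Z(G−u) · Z(G−v) ≤ Z(G) · Z(G−u−v)
    Z (univ.filter (fun e => eu e ≠ u)) * Z (univ.filter (fun e => ev e ≠ v)) ≤
      Z univ * Z (univ.filter (fun e => eu e ≠ u ∧ ev e ≠ v)) := by
  simp only [hZ, ← filter_filter]
  exact (matchingPartition_opposite_le_and_sameSide_le eu ev (fun e => (hw e).le) univ).1 u v

theorem stmt_4
    {U V E : Type*} [Fintype U] [Fintype V] [Fintype E]
    [DecidableEq U] [DecidableEq V] [DecidableEq E]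
    -- a finite simple bipartite graph
    (eu : E → U) (ev : E → V)
    (hsimple : Function.Injective (fun e => (eu e, ev e)))
    (w : E → ℝ) (hw : ∀ e, 0 < w e)
    (u : U) (v : V)
    -- Z A = matching partition function of the subgraph with edge set A
    (Z : Finset E → ℝ)
    (hZ : ∀ A : Finset E,
      Z A = ∑ S ∈ A.powerset.filter (fun S => IsBipMatching eu ev S), ∏ e ∈ S, w e) :
    -- Z(G−u) · Z(G−v) ≤ Z(G) · Z(G−u−v)
    Z (univ.filter (fun e => eu e ≠ u)) * Z (univ.filter (fun e => ev e ≠ v)) ≤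
      Z univ * Z (univ.filter (fun e => eu e ≠ u ∧ ev e ≠ v)) :=
  stmt_4_general eu ev w hw u v Z hZ
end

section
/- Fix an integer n ≥ 2 and set ε = 1/n. Consider the bipartite graph G with vertices {a} ∪ {u_1,…,u_n} on one side and {v_1,…,v_n} on the other, and edges e_i = {a, v_i} and g_i = {u_i, v_i} for i = 1,…,n; set activation probabilities x_{e_i} = ε and x_{g_i} = 1−ε. Let μ be any probability distribution on matchings of G such that for every edge f and every matching T with f ∉ T and P_{S∼μ}[S∖{f} = T] > 0, P_{S∼μ}[f ∈ S | S∖{f} = T] ≤ x_f, and suppose μ attains selectability α, i.e., P_{S∼μ}[f ∈ S] ≥ α x_f for every edge f. Then α ≤ (1 − α(1−ε)) / (2 − ε − α(1−ε)). Consequently, as ε → 0, any such α satisfies α ≤ (3−√5)/2, so no stationary OCRS for bipartite matchings can be better than (3−√5)/2-selectable. -/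
open Finset

namespace Stmt6

/-- Edges of the hard instance: `Sum.inl i` is the edge `e_i = {a, v_i}` and
`Sum.inr i` is the edge `g_i = {u_i, v_i}`.  The left endpoint of an edge:
`Sum.inl ()` is the vertex `a` and `Sum.inr i` is the vertex `u_i`. -/
def eu (n : ℕ) : Fin n ⊕ Fin n → Unit ⊕ Fin n
  | Sum.inl _ => Sum.inl ()
  | Sum.inr i => Sum.inr i

/-- The right endpoint of an edge: the vertex `v_i`. -/
def ev (n : ℕ) : Fin n ⊕ Fin n → Fin n
  | Sum.inl i => i
  | Sum.inr i => i

/-- `S` is a matching of the above bipartite graph. -/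
def IsMatching (n : ℕ) (S : Finset (Fin n ⊕ Fin n)) : Prop :=
  ∀ e ∈ S, ∀ f ∈ S, e ≠ f → eu n e ≠ eu n f ∧ ev n e ≠ ev n f

/-- Activation probabilities: `x(e_i) = ε = 1/n` and `x(g_i) = 1 − ε`. -/
noncomputable def x (n : ℕ) : Fin n ⊕ Fin n → ℝ
  | Sum.inl _ => 1 / (n : ℝ)
  | Sum.inr _ => 1 - 1 / (n : ℝ)

end Stmt6

namespace Stmt6Aux
open Stmt6

open Classical in
noncomputable def ind (P : Prop) : ℝ := if P then 1 else 0

lemma ind_nonneg (P : Prop) : 0 ≤ ind P := by unfold ind; split <;> norm_num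

lemma ind_of (P : Prop) (h : P) : ind P = 1 := by simp [ind, h]

lemma ind_of_not (P : Prop) (h : ¬ P) : ind P = 0 := by simp [ind, h]

lemma ind_not (P : Prop) : ind (¬ P) = 1 - ind P := by
  unfold ind; by_cases h : P <;> simp [h]

lemma ind_congr {P Q : Prop} (h : P ↔ Q) : ind P = ind Q := by
  by_cases hP : P
  · rw [ind_of _ hP, ind_of _ (h.mp hP)]
  · rw [ind_of_not _ hP, ind_of_not _ (fun q => hP (h.mpr q))]

variable {n : ℕ}

lemma matching_mono {S T : Finset (Fin n ⊕ Fin n)} (h : IsMatching n S) (hTS : T ⊆ S) :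
    IsMatching n T := fun e he f hf hef => h e (hTS he) f (hTS hf) hef

lemma e_unique {S : Finset (Fin n ⊕ Fin n)} (h : IsMatching n S) {i j : Fin n}
    (hi : Sum.inl i ∈ S) (hj : Sum.inl j ∈ S) : i = j := by
  by_contra hne
  have hne' : (Sum.inl i : Fin n ⊕ Fin n) ≠ Sum.inl j := by simp [hne]
  exact (h _ hi _ hj hne').1 rfl

lemma eg_clash {S : Finset (Fin n ⊕ Fin n)} (h : IsMatching n S) {i : Fin n}
    (hi : Sum.inl i ∈ S) (hg : Sum.inr i ∈ S) : False := by
  have hne : (Sum.inl i : Fin n ⊕ Fin n) ≠ Sum.inr i := by simp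
  exact (h _ hi _ hg hne).2 rfl

/-- `a` is free in `S`. -/
def af (S : Finset (Fin n ⊕ Fin n)) : Prop := ∀ j : Fin n, Sum.inl j ∉ S

noncomputable def ec (S : Finset (Fin n ⊕ Fin n)) : ℝ := ∑ j : Fin n, ind (Sum.inl j ∈ S)

noncomputable def gc (S : Finset (Fin n ⊕ Fin n)) : ℝ := ∑ i : Fin n, ind (Sum.inr i ∈ S)

lemma gc_nonneg (S : Finset (Fin n ⊕ Fin n)) : 0 ≤ gc S :=
  Finset.sum_nonneg fun _ _ => ind_nonneg _

lemma ec_matching {S : Finset (Fin n ⊕ Fin n)} (h : IsMatching n S) :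
    ec S = 1 - ind (af S) := by
  by_cases ha : af S
  · rw [ind_of _ ha]
    have hz : ∀ j : Fin n, ind (Sum.inl j ∈ S) = 0 := fun j => ind_of_not _ (ha j)
    simp [ec, hz]
  · rw [ind_of_not _ ha]
    obtain ⟨j, hj⟩ : ∃ j : Fin n, Sum.inl j ∈ S := by
      by_contra hc; push_neg at hc; exact ha hc
    have he : ec S = ∑ j' : Fin n, ind (Sum.inl j' ∈ S) := rfl
    rw [he, Finset.sum_eq_single j]
    · simp [ind_of _ hj]
    · intro j' _ hne
      exact ind_of_not _ fun hj' => hne (e_unique h hj' hj)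
    · intro habs; exact absurd (mem_univ j) habs

/-- Expectation of `c` under `μ`. -/
noncomputable def EE (μ : Finset (Fin n ⊕ Fin n) → ℝ) (c : Finset (Fin n ⊕ Fin n) → ℝ) : ℝ :=
  ∑ S : Finset (Fin n ⊕ Fin n), μ S * c S

variable {μ : Finset (Fin n ⊕ Fin n) → ℝ}

lemma EE_congr {c d : Finset (Fin n ⊕ Fin n) → ℝ}
    (h : ∀ S, μ S = 0 ∨ c S = d S) : EE μ c = EE μ d := by
  unfold EE
  refine Finset.sum_congr rfl fun S _ => ?_
  rcases h S with h0 | he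
  · rw [h0, zero_mul, zero_mul]
  · rw [he]

lemma EE_nonneg (hnn : ∀ S, 0 ≤ μ S) {c : Finset (Fin n ⊕ Fin n) → ℝ}
    (hc : ∀ S, 0 ≤ c S) : 0 ≤ EE μ c :=
  Finset.sum_nonneg fun S _ => mul_nonneg (hnn S) (hc S)

lemma EE_sub (c d : Finset (Fin n ⊕ Fin n) → ℝ) :
    EE μ (fun S => c S - d S) = EE μ c - EE μ d := by
  unfold EE
  rw [← Finset.sum_sub_distrib]
  exact Finset.sum_congr rfl fun S _ => by ring

lemma EE_smul (r : ℝ) (c : Finset (Fin n ⊕ Fin n) → ℝ) :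
    EE μ (fun S => r * c S) = r * EE μ c := by
  unfold EE
  rw [Finset.mul_sum]
  exact Finset.sum_congr rfl fun S _ => by ring

lemma EE_sum (c : Fin n → Finset (Fin n ⊕ Fin n) → ℝ) :
    ∑ i : Fin n, EE μ (c i) = EE μ (fun S => ∑ i : Fin n, c i S) := by
  unfold EE
  rw [Finset.sum_comm]
  exact Finset.sum_congr rfl fun S _ => by rw [Finset.mul_sum]

lemma EE_one (hsum : (∑ S : Finset (Fin n ⊕ Fin n), μ S) = 1) :
    EE μ (fun _ => 1) = 1 := by
  unfold EE; simp [hsum]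

lemma mu_insert_le (hnn : ∀ S, 0 ≤ μ S) (hsupp : ∀ S, μ S ≠ 0 → IsMatching n S)
    (hstat : ∀ f : Fin n ⊕ Fin n, ∀ T : Finset (Fin n ⊕ Fin n),
      IsMatching n T → f ∉ T → 0 < μ T + μ (insert f T) →
      μ (insert f T) / (μ T + μ (insert f T)) ≤ x n f)
    (f : Fin n ⊕ Fin n) (T : Finset (Fin n ⊕ Fin n)) (hf : f ∉ T) :
    (1 - x n f) * μ (insert f T) ≤ x n f * μ T := by
  by_cases hm : IsMatching n T
  · by_cases hpos : 0 < μ T + μ (insert f T)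
    · have h := hstat f T hm hf hpos
      rw [div_le_iff₀ hpos] at h
      nlinarith [h]
    · have h1 : μ T = 0 := le_antisymm (by nlinarith [hnn T, hnn (insert f T)]) (hnn T)
      have h2 : μ (insert f T) = 0 :=
        le_antisymm (by nlinarith [hnn T, hnn (insert f T)]) (hnn (insert f T))
      rw [h1, h2, mul_zero, mul_zero]
  · have h1 : μ T = 0 := by
      by_contra hc; exact hm (hsupp T hc)
    have h2 : μ (insert f T) = 0 := by
      by_contra hc
      exact hm (matching_mono (hsupp _ hc) (Finset.subset_insert f T))
    rw [h1, h2, mul_zero, mul_zero]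

lemma sum_insert_eq (μ : Finset (Fin n ⊕ Fin n) → ℝ) (f : Fin n ⊕ Fin n)
    (c : Finset (Fin n ⊕ Fin n) → ℝ) :
    ∑ S ∈ univ.filter (fun S => f ∈ S), μ S * c (S.erase f)
      = ∑ T ∈ univ.filter (fun T => f ∉ T), μ (insert f T) * c T := by
  apply Finset.sum_nbij' (fun S => S.erase f) (fun T => insert f T)
  · intro S hS
    simp only [mem_filter, mem_univ, true_and] at hS ⊢
    exact Finset.notMem_erase f S
  · intro T hT
    simp only [mem_filter, mem_univ, true_and] at hT ⊢
    exact Finset.mem_insert_self f T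
  · intro S hS
    simp only [mem_filter, mem_univ, true_and] at hS
    exact Finset.insert_erase hS
  · intro T hT
    simp only [mem_filter, mem_univ, true_and] at hT
    exact Finset.erase_insert hT
  · intro S hS
    simp only [mem_filter, mem_univ, true_and] at hS
    rw [Finset.insert_erase hS]

lemma master (hnn : ∀ S, 0 ≤ μ S) (hsupp : ∀ S, μ S ≠ 0 → IsMatching n S)
    (hstat : ∀ f : Fin n ⊕ Fin n, ∀ T : Finset (Fin n ⊕ Fin n),
      IsMatching n T → f ∉ T → 0 < μ T + μ (insert f T) →
      μ (insert f T) / (μ T + μ (insert f T)) ≤ x n f)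
    (f : Fin n ⊕ Fin n) (c : Finset (Fin n ⊕ Fin n) → ℝ) (hc : ∀ T, 0 ≤ c T) :
    (1 - x n f) * (∑ S : Finset (Fin n ⊕ Fin n), μ S * (if f ∈ S then c (S.erase f) else 0))
      ≤ x n f * (∑ T : Finset (Fin n ⊕ Fin n), μ T * (if f ∈ T then 0 else c T)) := by
  classical
  have e1 : (∑ S : Finset (Fin n ⊕ Fin n), μ S * (if f ∈ S then c (S.erase f) else 0))
      = ∑ T ∈ univ.filter (fun T => f ∉ T), μ (insert f T) * c T := by
    rw [← sum_insert_eq μ f c, Finset.sum_filter]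
    apply Finset.sum_congr rfl
    intro S _
    by_cases h : f ∈ S <;> simp [h]
  have e2 : (∑ T : Finset (Fin n ⊕ Fin n), μ T * (if f ∈ T then 0 else c T))
      = ∑ T ∈ univ.filter (fun T => f ∉ T), μ T * c T := by
    rw [Finset.sum_filter]
    apply Finset.sum_congr rfl
    intro T _
    by_cases h : f ∈ T <;> simp [h]
  rw [e1, e2, Finset.mul_sum, Finset.mul_sum]
  apply Finset.sum_le_sum
  intro T hT
  simp only [mem_filter, mem_univ, true_and] at hT
  have key := mu_insert_le hnn hsupp hstat f T hT
  calc (1 - x n f) * (μ (insert f T) * c T)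
      = ((1 - x n f) * μ (insert f T)) * c T := by ring
    _ ≤ (x n f * μ T) * c T := mul_le_mul_of_nonneg_right key (hc T)
    _ = x n f * (μ T * c T) := by ring

lemma erase_af {S : Finset (Fin n ⊕ Fin n)} (hm : IsMatching n S) {i : Fin n}
    (hi : Sum.inl i ∈ S) : af (S.erase (Sum.inl i)) := by
  intro j hj
  rw [Finset.mem_erase] at hj
  exact hj.1 (by rw [e_unique hm hj.2 hi])

section
variable (hnn : ∀ S, 0 ≤ μ S) (hsupp : ∀ S, μ S ≠ 0 → IsMatching n S)
    (hstat : ∀ f : Fin n ⊕ Fin n, ∀ T : Finset (Fin n ⊕ Fin n),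
      IsMatching n T → f ∉ T → 0 < μ T + μ (insert f T) →
      μ (insert f T) / (μ T + μ (insert f T)) ≤ x n f)
include hnn hsupp hstat

lemma H1 (i : Fin n) :
    (1 - 1/(n:ℝ)) * EE μ (fun S => ind (Sum.inl i ∈ S))
      ≤ (1/(n:ℝ)) * EE μ (fun S => ind (af S) * ind (Sum.inr i ∉ S)) := by
  have hm := master hnn hsupp hstat (Sum.inl i)
    (fun T => ind (af T) * ind (Sum.inr i ∉ T))
    (fun T => mul_nonneg (ind_nonneg _) (ind_nonneg _))
  have hx : x n (Sum.inl i) = 1/(n:ℝ) := rfl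
  rw [hx] at hm
  refine le_trans (le_of_eq ?_) (le_trans hm (le_of_eq ?_))
  · congr 1
    refine EE_congr fun S => ?_
    by_cases h0 : μ S = 0
    · exact Or.inl h0
    · right
      have hms := hsupp S h0
      by_cases hi : Sum.inl i ∈ S
      · rw [if_pos hi, ind_of _ hi]
        have h2 : Sum.inr i ∉ S.erase (Sum.inl i) := by
          intro hg
          exact eg_clash hms hi (Finset.mem_erase.mp hg).2
        beta_reduce
        rw [ind_of _ (erase_af hms hi), ind_of _ h2, one_mul]
      · rw [if_neg hi, ind_of_not _ hi]
  · congr 1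
    refine EE_congr fun T => Or.inr ?_
    by_cases h : Sum.inl i ∈ T
    · rw [if_pos h, ind_of_not _ (fun haf => haf i h), zero_mul]
    · rw [if_neg h]

lemma H2 (i j : Fin n) :
    (1 - 1/(n:ℝ)) * EE μ (fun S => ind (Sum.inl j ∈ S) * ind (Sum.inr i ∈ S))
      ≤ (1/(n:ℝ)) * EE μ (fun S => ind (af S) * ind (Sum.inr j ∉ S) * ind (Sum.inr i ∈ S)) := by
  have hm := master hnn hsupp hstat (Sum.inl j)
    (fun T => ind (af T) * ind (Sum.inr j ∉ T) * ind (Sum.inr i ∈ T))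
    (fun T => mul_nonneg (mul_nonneg (ind_nonneg _) (ind_nonneg _)) (ind_nonneg _))
  have hx : x n (Sum.inl j) = 1/(n:ℝ) := rfl
  rw [hx] at hm
  refine le_trans (le_of_eq ?_) (le_trans hm (le_of_eq ?_))
  · congr 1
    refine EE_congr fun S => ?_
    by_cases h0 : μ S = 0
    · exact Or.inl h0
    · right
      have hms := hsupp S h0
      by_cases hj : Sum.inl j ∈ S
      · rw [if_pos hj, ind_of _ hj, one_mul]
        have h2 : Sum.inr j ∉ S.erase (Sum.inl j) := by
          intro hg
          exact eg_clash hms hj (Finset.mem_erase.mp hg).2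
        have h3 : ind (Sum.inr i ∈ S.erase (Sum.inl j)) = ind (Sum.inr i ∈ S) := by
          refine ind_congr ?_
          rw [Finset.mem_erase]
          simp
        beta_reduce
        rw [ind_of _ (erase_af hms hj), ind_of _ h2, h3, one_mul, one_mul]
      · rw [if_neg hj, ind_of_not _ hj, zero_mul]
  · congr 1
    refine EE_congr fun T => Or.inr ?_
    by_cases h : Sum.inl j ∈ T
    · rw [if_pos h, ind_of_not _ (fun haf => haf j h), zero_mul, zero_mul]
    · rw [if_neg h]

end

set_option maxHeartbeats 1000000 in
lemma final_arith (ε P Y Z Qs α : ℝ) (hε : 0 < ε) (hε2 : ε ≤ 1/2)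
    (h1 : (2-ε)*P + ε*Y ≤ 1)
    (h2 : (1-ε)*Qs ≤ (2-ε)*Y - ε*Z)
    (h5 : α*(1-ε) ≤ ε*Qs)
    (h3 : Y*Y ≤ (1-P)*Z)
    (h4 : α ≤ P)
    (hY : 0 ≤ Y) (hZ : 0 ≤ Z) :
    α ≤ (1 - α*(1-ε)) / (2 - ε - α*(1-ε)) := by
  have hεY : 0 ≤ ε*Y := mul_nonneg hε.le hY
  have hα1 : (2-ε)*α ≤ 1 := by
    nlinarith [mul_le_mul_of_nonneg_left h4 (by linarith : (0:ℝ) ≤ 2-ε)]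
  have hα2 : α ≤ 2/3 := by
    rcases le_or_gt α 0 with h | h
    · linarith
    · nlinarith
  have hD : 0 < 2 - ε - α*(1-ε) := by
    rcases le_or_gt α 0 with h | h
    · nlinarith [mul_nonneg (neg_nonneg.mpr h) (by linarith : (0:ℝ) ≤ 1-ε)]
    · nlinarith
  rw [le_div_iff₀ hD]
  by_contra hcon
  push_neg at hcon
  have hαpos : 0 < α := by
    by_contra hneg
    push_neg at hneg
    nlinarith [mul_nonneg (neg_nonneg.mpr hneg) hD.le,
      mul_nonneg (neg_nonneg.mpr hneg) (by linarith : (0:ℝ) ≤ 1-ε)]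
  have hα3 : α < 1 := by linarith
  have hyc : ε*Y < α*(1-ε)*(1-α) := by
    nlinarith [mul_le_mul_of_nonneg_left h4 (by linarith : (0:ℝ) ≤ 2-ε)]
  have key0 : α*(1-ε)*(1-ε) ≤ (2-ε)*(ε*Y) - ε*(ε*Z) := by
    nlinarith [mul_le_mul_of_nonneg_left h2 hε.le,
      mul_le_mul_of_nonneg_left h5 (by linarith : (0:ℝ) ≤ 1-ε)]
  have keyz : (ε*Y)*(ε*Y) ≤ (1-α)*(ε*(ε*Z)) := by
    nlinarith [mul_le_mul_of_nonneg_left h3 (mul_nonneg hε.le hε.le),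
      mul_le_mul_of_nonneg_left
        (mul_le_mul_of_nonneg_right (by linarith : 1-P ≤ 1-α) hZ)
        (mul_nonneg hε.le hε.le)]
  have key1 : α*(1-ε)*(1-ε)*(1-α) ≤ (2-ε)*(1-α)*(ε*Y) - (ε*Y)*(ε*Y) := by
    nlinarith [mul_le_mul_of_nonneg_left key0 (by linarith : (0:ℝ) ≤ 1-α)]
  have hq : 0 < α*(1-ε)*(1-α) :=
    mul_pos (mul_pos hαpos (by linarith)) (by linarith)
  have hcy : 0 < α*(1-ε)*(1-α) - ε*Y := by linarith
  have h2a : 2*α*(1-ε) ≤ 2-ε := by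
    nlinarith [mul_le_mul_of_nonneg_right (by linarith : 2*α ≤ 4/3) (by linarith : (0:ℝ) ≤ 1-ε)]
  have hc2 : 2*(α*(1-ε)*(1-α)) ≤ (2-ε)*(1-α) := by
    have := mul_le_mul_of_nonneg_right h2a (by linarith : (0:ℝ) ≤ 1-α)
    nlinarith [this]
  have hsec : 0 < (2-ε)*(1-α) - α*(1-ε)*(1-α) - ε*Y := by linarith
  have hprod : 0 < (α*(1-ε)*(1-α) - ε*Y) * ((2-ε)*(1-α) - α*(1-ε)*(1-α) - ε*Y) :=
    mul_pos hcy hsec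
  have key1' : α*(1-ε)*(1-ε)*(1-α)
      < (2-ε)*(1-α)*(α*(1-ε)*(1-α)) - (α*(1-ε)*(1-α))*(α*(1-ε)*(1-α)) := by
    nlinarith [key1, hprod]
  have key2 : (1-ε) < (1-α)*(2-ε-α*(1-ε)) := by
    by_contra k2
    push_neg at k2
    nlinarith [key1', mul_le_mul_of_nonneg_left k2 hq.le]
  nlinarith [hcon, key2]

end Stmt6Aux


open Stmt6 in
theorem stmt_6 (n : ℕ) (hn : 2 ≤ n)
    (μ : Finset (Fin n ⊕ Fin n) → ℝ) (α : ℝ)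
    (hnn : ∀ S, 0 ≤ μ S)
    (hsum : (∑ S : Finset (Fin n ⊕ Fin n), μ S) = 1)
    (hsupp : ∀ S, μ S ≠ 0 → IsMatching n S)
    -- stationary implementability
    (hstat : ∀ f : Fin n ⊕ Fin n, ∀ T : Finset (Fin n ⊕ Fin n),
      IsMatching n T → f ∉ T → 0 < μ T + μ (insert f T) →
      μ (insert f T) / (μ T + μ (insert f T)) ≤ x n f)
    -- μ attains selectability α
    (hsel : ∀ f : Fin n ⊕ Fin n,
      α * x n f ≤ ∑ S ∈ univ.filter (fun S => f ∈ S), μ S) :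
    α ≤ (1 - α * (1 - 1 / (n : ℝ))) / (2 - 1 / (n : ℝ) - α * (1 - 1 / (n : ℝ))) := by
  classical
  open Stmt6Aux in
  have hn2 : (2:ℝ) ≤ (n:ℝ) := by exact_mod_cast hn
  have hnpos : (0:ℝ) < (n:ℝ) := by linarith
  have hnne : (n:ℝ) ≠ 0 := ne_of_gt hnpos
  have hε : (0:ℝ) < 1/(n:ℝ) := by positivity
  have hε2 : 1/(n:ℝ) ≤ 1/2 := by
    rw [div_le_div_iff₀ hnpos (by norm_num : (0:ℝ) < 2)]
    linarith
  have e3 : ∀ S : Finset (Fin n ⊕ Fin n), ∑ j : Fin n, ind (Sum.inr j ∉ S) = (n:ℝ) - gc S := by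
    intro S
    rw [Finset.sum_congr rfl (fun j _ => ind_not (Sum.inr j ∈ S)), Finset.sum_sub_distrib,
      Finset.sum_const, Finset.card_univ, Fintype.card_fin, nsmul_eq_mul, mul_one]
    rfl
  have hp : ∀ i : Fin n, α * (1/(n:ℝ)) ≤ EE μ (fun S => ind (Sum.inl i ∈ S)) := by
    intro i
    have h := hsel (Sum.inl i)
    have hx : x n (Sum.inl i) = 1/(n:ℝ) := rfl
    rw [hx] at h
    refine le_trans h (le_of_eq ?_)
    rw [Finset.sum_filter]
    refine Finset.sum_congr rfl fun S _ => ?_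
    beta_reduce
    by_cases hS : Sum.inl i ∈ S
    · rw [if_pos hS, ind_of _ hS, mul_one]
    · rw [if_neg hS, ind_of_not _ hS, mul_zero]
  have hq : ∀ i : Fin n, α * (1 - 1/(n:ℝ)) ≤ EE μ (fun S => ind (Sum.inr i ∈ S)) := by
    intro i
    have h := hsel (Sum.inr i)
    have hx : x n (Sum.inr i) = 1 - 1/(n:ℝ) := rfl
    rw [hx] at h
    refine le_trans h (le_of_eq ?_)
    rw [Finset.sum_filter]
    refine Finset.sum_congr rfl fun S _ => ?_
    beta_reduce
    by_cases hS : Sum.inr i ∈ S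
    · rw [if_pos hS, ind_of _ hS, mul_one]
    · rw [if_neg hS, ind_of_not _ hS, mul_zero]
  have sP : EE μ ec = ∑ i : Fin n, EE μ (fun S => ind (Sum.inl i ∈ S)) :=
    (EE_sum (fun i S => ind (Sum.inl i ∈ S))).symm
  have sQ : EE μ gc = ∑ i : Fin n, EE μ (fun S => ind (Sum.inr i ∈ S)) :=
    (EE_sum (fun i S => ind (Sum.inr i ∈ S))).symm
  have hP : α ≤ EE μ ec := by
    have hs := Finset.sum_le_sum (fun i (_ : i ∈ (univ : Finset (Fin n))) => hp i)
    rw [Finset.sum_const, Finset.card_univ, Fintype.card_fin, nsmul_eq_mul] at hs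
    rw [sP]
    calc α = (n:ℝ) * (α * (1/(n:ℝ))) := by field_simp
      _ ≤ _ := hs
  have hQs : α * (1 - 1/(n:ℝ)) ≤ (1/(n:ℝ)) * EE μ gc := by
    have hs := Finset.sum_le_sum (fun i (_ : i ∈ (univ : Finset (Fin n))) => hq i)
    rw [Finset.sum_const, Finset.card_univ, Fintype.card_fin, nsmul_eq_mul, ← sQ] at hs
    have h2 := mul_le_mul_of_nonneg_left hs hε.le
    calc α * (1 - 1/(n:ℝ)) = (1/(n:ℝ)) * ((n:ℝ) * (α * (1 - 1/(n:ℝ)))) := by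
          field_simp
      _ ≤ (1/(n:ℝ)) * EE μ gc := h2
  have f1 : (1 - 1/(n:ℝ)) * EE μ ec
      ≤ (1/(n:ℝ)) * ((n:ℝ) * EE μ (fun S => ind (af S)) - EE μ (fun S => ind (af S) * gc S)) := by
    have hs := Finset.sum_le_sum (fun i (_ : i ∈ (univ : Finset (Fin n))) => H1 hnn hsupp hstat i)
    rw [← Finset.mul_sum, ← Finset.mul_sum, ← sP] at hs
    have e : ∑ i : Fin n, EE μ (fun S => ind (af S) * ind (Sum.inr i ∉ S))
        = (n:ℝ) * EE μ (fun S => ind (af S)) - EE μ (fun S => ind (af S) * gc S) := by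
      rw [EE_sum]
      have e2 : EE μ (fun S => ∑ i : Fin n, ind (af S) * ind (Sum.inr i ∉ S))
          = EE μ (fun S => (n:ℝ) * ind (af S) - ind (af S) * gc S) := by
        refine EE_congr fun S => Or.inr ?_
        rw [← Finset.mul_sum, e3 S]
        ring
      rw [e2, EE_sub, EE_smul]
    rw [e] at hs
    exact hs
  have f2 : (1 - 1/(n:ℝ)) * EE μ (fun S => ec S * gc S)
      ≤ (1/(n:ℝ)) * ((n:ℝ) * EE μ (fun S => ind (af S) * gc S)
          - EE μ (fun S => ind (af S) * (gc S * gc S))) := by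
    have hs : ∑ i : Fin n, ∑ j : Fin n,
          (1 - 1/(n:ℝ)) * EE μ (fun S => ind (Sum.inl j ∈ S) * ind (Sum.inr i ∈ S))
        ≤ ∑ i : Fin n, ∑ j : Fin n,
          (1/(n:ℝ)) * EE μ (fun S => ind (af S) * ind (Sum.inr j ∉ S) * ind (Sum.inr i ∈ S)) :=
      Finset.sum_le_sum (fun i _ => Finset.sum_le_sum (fun j _ => H2 hnn hsupp hstat i j))
    simp only [← Finset.mul_sum] at hs
    have eL : ∑ i : Fin n, ∑ j : Fin n,
          EE μ (fun S => ind (Sum.inl j ∈ S) * ind (Sum.inr i ∈ S))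
        = EE μ (fun S => ec S * gc S) := by
      have e1 : ∀ i : Fin n, ∑ j : Fin n, EE μ (fun S => ind (Sum.inl j ∈ S) * ind (Sum.inr i ∈ S))
          = EE μ (fun S => ec S * ind (Sum.inr i ∈ S)) := by
        intro i
        rw [EE_sum]
        refine EE_congr fun S => Or.inr ?_
        rw [← Finset.sum_mul]
        rfl
      rw [Finset.sum_congr rfl (fun i _ => e1 i), EE_sum]
      refine EE_congr fun S => Or.inr ?_
      rw [← Finset.mul_sum]
      rfl
    have eR : ∑ i : Fin n, ∑ j : Fin n,
          EE μ (fun S => ind (af S) * ind (Sum.inr j ∉ S) * ind (Sum.inr i ∈ S))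
        = (n:ℝ) * EE μ (fun S => ind (af S) * gc S)
            - EE μ (fun S => ind (af S) * (gc S * gc S)) := by
      have e1 : ∀ i : Fin n, ∑ j : Fin n,
            EE μ (fun S => ind (af S) * ind (Sum.inr j ∉ S) * ind (Sum.inr i ∈ S))
          = EE μ (fun S => (ind (af S) * ((n:ℝ) - gc S)) * ind (Sum.inr i ∈ S)) := by
        intro i
        rw [EE_sum]
        refine EE_congr fun S => Or.inr ?_
        rw [← Finset.sum_mul, ← Finset.mul_sum, e3 S]
      rw [Finset.sum_congr rfl (fun i _ => e1 i), EE_sum]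
      have e2 : EE μ (fun S => ∑ i : Fin n, (ind (af S) * ((n:ℝ) - gc S)) * ind (Sum.inr i ∈ S))
          = EE μ (fun S => (n:ℝ) * (ind (af S) * gc S) - ind (af S) * (gc S * gc S)) := by
        refine EE_congr fun S => Or.inr ?_
        rw [← Finset.mul_sum]
        show (ind (af S) * ((n:ℝ) - gc S)) * gc S
            = (n:ℝ) * (ind (af S) * gc S) - ind (af S) * (gc S * gc S)
        ring
      rw [e2, EE_sub, EE_smul]
    rw [eL, eR] at hs
    exact hs
  -- support identities
  have hecgc : EE μ (fun S => ec S * gc S)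
      = EE μ gc - EE μ (fun S => ind (af S) * gc S) := by
    have e1 : EE μ (fun S => ec S * gc S) = EE μ (fun S => gc S - ind (af S) * gc S) := by
      refine EE_congr fun S => ?_
      by_cases h0 : μ S = 0
      · exact Or.inl h0
      · right
        rw [ec_matching (hsupp S h0)]
        ring
    rw [e1, EE_sub]
  have hA : EE μ (fun S => ind (af S)) = 1 - EE μ ec := by
    have e1 : EE μ (fun S => ind (af S)) = EE μ (fun S => 1 - ec S) := by
      refine EE_congr fun S => ?_
      by_cases h0 : μ S = 0
      · exact Or.inl h0
      · right
        rw [ec_matching (hsupp S h0)]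
        ring
    rw [e1, EE_sub, EE_one hsum]
  -- Cauchy-Schwarz
  have hCS : EE μ (fun S => ind (af S) * gc S) * EE μ (fun S => ind (af S) * gc S)
      ≤ EE μ (fun S => ind (af S)) * EE μ (fun S => ind (af S) * (gc S * gc S)) := by
    have cs := Finset.sum_mul_sq_le_sq_mul_sq Finset.univ
      (fun S : Finset (Fin n ⊕ Fin n) => Real.sqrt (μ S * ind (af S)))
      (fun S : Finset (Fin n ⊕ Fin n) => Real.sqrt (μ S * ind (af S)) * gc S)
    beta_reduce at cs
    have E1 : (∑ S : Finset (Fin n ⊕ Fin n),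
          Real.sqrt (μ S * ind (af S)) * (Real.sqrt (μ S * ind (af S)) * gc S))
        = ∑ S : Finset (Fin n ⊕ Fin n), μ S * (ind (af S) * gc S) := by
      refine Finset.sum_congr rfl fun S _ => ?_
      rw [← mul_assoc, Real.mul_self_sqrt (mul_nonneg (hnn S) (ind_nonneg _)), mul_assoc]
    have E2 : (∑ S : Finset (Fin n ⊕ Fin n), (Real.sqrt (μ S * ind (af S)))^2)
        = ∑ S : Finset (Fin n ⊕ Fin n), μ S * ind (af S) := by
      refine Finset.sum_congr rfl fun S _ => ?_
      exact Real.sq_sqrt (mul_nonneg (hnn S) (ind_nonneg _))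
    have E3 : (∑ S : Finset (Fin n ⊕ Fin n), (Real.sqrt (μ S * ind (af S)) * gc S)^2)
        = ∑ S : Finset (Fin n ⊕ Fin n), μ S * (ind (af S) * (gc S * gc S)) := by
      refine Finset.sum_congr rfl fun S _ => ?_
      rw [mul_pow, Real.sq_sqrt (mul_nonneg (hnn S) (ind_nonneg _))]
      ring
    rw [E1, E2, E3, pow_two] at cs
    exact cs
  -- assemble the hypotheses of the final inequality
  have h1 : (2 - 1/(n:ℝ)) * EE μ ec + (1/(n:ℝ)) * EE μ (fun S => ind (af S) * gc S) ≤ 1 := by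
    have e : (1/(n:ℝ)) * ((n:ℝ) * EE μ (fun S => ind (af S)) - EE μ (fun S => ind (af S) * gc S))
        = EE μ (fun S => ind (af S)) - (1/(n:ℝ)) * EE μ (fun S => ind (af S) * gc S) := by
      field_simp
    rw [e, hA] at f1
    linarith
  have h2 : (1 - 1/(n:ℝ)) * EE μ gc
      ≤ (2 - 1/(n:ℝ)) * EE μ (fun S => ind (af S) * gc S)
        - (1/(n:ℝ)) * EE μ (fun S => ind (af S) * (gc S * gc S)) := by
    have e : (1/(n:ℝ)) * ((n:ℝ) * EE μ (fun S => ind (af S) * gc S)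
          - EE μ (fun S => ind (af S) * (gc S * gc S)))
        = EE μ (fun S => ind (af S) * gc S)
          - (1/(n:ℝ)) * EE μ (fun S => ind (af S) * (gc S * gc S)) := by
      field_simp
    rw [e, hecgc] at f2
    nlinarith [f2]
  have h3 : EE μ (fun S => ind (af S) * gc S) * EE μ (fun S => ind (af S) * gc S)
      ≤ (1 - EE μ ec) * EE μ (fun S => ind (af S) * (gc S * gc S)) := by
    rw [← hA]
    exact hCS
  have hY0 : 0 ≤ EE μ (fun S => ind (af S) * gc S) :=
    EE_nonneg hnn (fun S => mul_nonneg (ind_nonneg _) (gc_nonneg S))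
  have hZ0 : 0 ≤ EE μ (fun S => ind (af S) * (gc S * gc S)) :=
    EE_nonneg hnn (fun S => mul_nonneg (ind_nonneg _) (mul_nonneg (gc_nonneg S) (gc_nonneg S)))
  exact final_arith (1/(n:ℝ)) (EE μ ec) (EE μ (fun S => ind (af S) * gc S))
    (EE μ (fun S => ind (af S) * (gc S * gc S))) (EE μ gc) α hε hε2 h1 h2 hQs h3 hP hY0 hZ0
end

section
/- Let T = Σ_{e∈E} Y_e be a finite sum of independent Bernoulli random variables with arbitrary success probabilities, and let Q be a Poisson random variable with arbitrary mean. Fix an integer k ≥ 1 with P[T ≤ k] > 0. If E[T | T ≤ k] ≤ E[Q | Q ≤ k], then P[T < k | T ≤ k] ≥ P[Q < k | Q ≤ k]. -/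
/-!
The Poisson–binomial pmf `a` is the coefficient sequence of `∏ₑ (pₑ X + 1 - pₑ)`, and multiplying
by a linear factor with nonnegative coefficients preserves ultra-log-concavity (`t! a t`
log-concave) and the absence of internal zeros. The Poisson pmf `b` is the extremal case,
`t! b t` being log-linear, so the likelihood ratio `a / b` is log-concave, hence quasi-concave.
Writing `A`, `B` for the masses of `[0, k]`, the sequence `d t = B a t - A b t` therefore changes
sign at most once on `[0, k]`, from `-` to `+`. As `∑ d t = 0` and the mean hypothesis says
`∑ t d t ≤ 0`, `d` cannot be positive at `k`, i.e. `P[T = k | T ≤ k] ≤ P[Q = k | Q ≤ k]`.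
-/

open Finset Polynomial

theorem coeff_prod_C_mul_X_add_C {R E : Type*} [CommSemiring R] [DecidableEq E]
    (f g : E → R) (s : Finset E) (t : ℕ) :
    (∏ e ∈ s, (C (f e) * X + C (g e))).coeff t =
      ∑ S ∈ s.powersetCard t, (∏ e ∈ S, f e) * ∏ e ∈ s \ S, g e := by
  have hterm (S : Finset E) : (∏ e ∈ S, C (f e) * X) * ∏ e ∈ s \ S, C (g e) =
      C ((∏ e ∈ S, f e) * ∏ e ∈ s \ S, g e) * X ^ S.card := by
    rw [prod_mul_distrib, prod_const, ← map_prod, ← map_prod, C_mul]; ring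
  simp_rw [prod_add, hterm, finsetSum_coeff, coeff_C_mul_X_pow, powersetCard_eq_filter, sum_filter,
    eq_comm]

theorem Polynomial.exists_eq_add_one_of_coeff_X_mul_pos {R : Type*} [Semiring R] [Preorder R]
    {P : R[X]} {x : ℕ} (hx : 0 < (X * P).coeff x) : ∃ y, x = y + 1 ∧ 0 < P.coeff y := by
  cases x with
  | zero => simp at hx
  | succ y => exact ⟨y, rfl, by rwa [coeff_X_mul] at hx⟩

theorem le_of_logConcave {r : ℕ → ℝ} (hlc : ∀ t, r t * r (t + 2) ≤ r (t + 1) ^ 2) {i k : ℕ}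
    (hpos : ∀ t ∈ Icc i k, 0 < r t) {c : ℝ} (hi : c ≤ r i) (hk : c ≤ r k) :
    ∀ t ∈ Icc i k, c ≤ r t := by
  by_contra! h
  obtain ⟨t₀, ht₀, hlt⟩ := h
  obtain ⟨m, hm, hmin⟩ := (Icc i k).exists_min_image r ⟨t₀, ht₀⟩
  -- the leftmost minimiser is a strict local minimum from the left, contradicting log-concavity
  obtain ⟨t, ht, hfirst⟩ := ((Icc i k).filter (r · = r m)).exists_min_image id ⟨m, by simp [hm]⟩
  simp only [mem_filter, mem_Icc] at ht hfirst
  have hrm : r m < c := (hmin t₀ ht₀).trans_lt hlt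
  obtain ⟨s, rfl⟩ : ∃ s, t = s + 1 := ⟨t - 1, by
    have : t ≠ i := by rintro rfl; linarith [ht.2]
    omega⟩
  have hsI : s ∈ Icc i k := by
    have : s + 1 ≠ i := by rintro rfl; linarith [ht.2]
    simp only [mem_Icc]; omega
  have hs2I : s + 2 ∈ Icc i k := by
    have : s + 1 ≠ k := by rintro rfl; linarith [ht.2]
    simp only [mem_Icc]; omega
  have hs : r m < r s := (hmin s hsI).lt_of_ne fun h => by
    have := hfirst s ⟨by simpa using hsI, h.symm⟩
    simp at this
  have hlcs := hlc s
  rw [ht.2] at hlcs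
  nlinarith [hmin _ hs2I, hpos m hm]

/-- Ultra-log-concavity in Liggett's sense (`t! a t` is log-concave) together with the absence of
internal zeros. -/
structure UltraLogConcave (a : ℕ → ℝ) : Prop where
  nonneg : ∀ t, 0 ≤ a t
  mul_le : ∀ t : ℕ, ((t : ℝ) + 2) * (a (t + 2) * a t) ≤ ((t : ℝ) + 1) * (a (t + 1) * a (t + 1))
  pos_of_le_of_le : ∀ ⦃s t r : ℕ⦄, s ≤ t → t ≤ r → 0 < a s → 0 < a r → 0 < a t

namespace UltraLogConcave

variable {P : ℝ[X]}

theorem coeff_X_mul_nonneg (hP : UltraLogConcave P.coeff) (t : ℕ) : 0 ≤ (X * P).coeff t := by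
  cases t with
  | zero => simp
  | succ t => simpa [coeff_X_mul] using hP.nonneg t

theorem mul_coeff_X_mul_le (hP : UltraLogConcave P.coeff) (t : ℕ) :
    ((t : ℝ) + 1) * (P.coeff (t + 1) * (X * P).coeff t) ≤ t * (P.coeff t * P.coeff t) := by
  cases t with
  | zero => simp
  | succ t => simpa [coeff_X_mul, add_assoc, one_add_one_eq_two] using hP.mul_le t

theorem mul_coeff_X_mul_le_mul (hP : UltraLogConcave P.coeff) (t : ℕ) :
    ((t : ℝ) + 2) * (P.coeff (t + 2) * (X * P).coeff t) ≤ t * (P.coeff (t + 1) * P.coeff t) := by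
  have hrhs : 0 ≤ (t : ℝ) * (P.coeff (t + 1) * P.coeff t) :=
    mul_nonneg t.cast_nonneg (mul_nonneg (hP.nonneg _) (hP.nonneg _))
  rcases (mul_nonneg (hP.nonneg (t + 2)) (hP.coeff_X_mul_nonneg t)).eq_or_lt with hz | hpos
  · rw [← hz, mul_zero]; exact hrhs
  obtain ⟨s, rfl⟩ : ∃ s, t = s + 1 := by
    cases t with
    | zero => simp at hpos
    | succ s => exact ⟨s, rfl⟩
  rw [coeff_X_mul] at hpos
  have hlast := pos_of_mul_pos_left hpos (hP.nonneg _)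
  have hfirst := pos_of_mul_pos_right hpos (hP.nonneg _)
  -- multiply the inequalities at `t` and `t - 1`, then cancel the positive middle coefficients
  have h1 := hP.pos_of_le_of_le (by omega : s ≤ s + 1) (by omega) hfirst hlast
  have h2 := hP.pos_of_le_of_le (by omega : s ≤ s + 2) (by omega) hfirst hlast
  have := mul_le_mul (hP.mul_le (s + 1)) (hP.mul_coeff_X_mul_le (s + 1))
    (mul_nonneg (by positivity) (mul_nonneg (hP.nonneg _) (hP.coeff_X_mul_nonneg _)))
    (by positivity)
  rw [coeff_X_mul] at this ⊢
  push_cast at this ⊢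
  have hc : 0 < ((s : ℝ) + 1 + 1) * P.coeff (s + 2) * P.coeff (s + 1) := by positivity
  refine le_of_mul_le_mul_left ?_ hc
  nlinarith

theorem C_mul_X_add_C_mul (hP : UltraLogConcave P.coeff) {p q : ℝ} (hp : 0 ≤ p) (hq : 0 ≤ q) :
    UltraLogConcave ((C p * X + C q) * P).coeff := by
  have hcoeff (t : ℕ) : ((C p * X + C q) * P).coeff t = p * (X * P).coeff t + q * P.coeff t := by
    rw [add_mul, coeff_add, mul_assoc, coeff_C_mul, coeff_C_mul]
  have hX := hP.coeff_X_mul_nonneg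
  refine ⟨fun t => ?_, fun t => ?_, fun s t r hst htr hs hr => ?_⟩
  · rw [hcoeff]
    exact add_nonneg (mul_nonneg hp (hX t)) (mul_nonneg hq (hP.nonneg t))
  · simp only [hcoeff, coeff_X_mul]
    -- the `q ^ 2`, `p * q` and `p ^ 2` parts of the inequality hold separately
    have h := hP.mul_coeff_X_mul_le t
    have hx := mul_nonneg (hP.nonneg (t + 1)) (hX t)
    have hy := mul_nonneg (hP.nonneg t) (hP.nonneg t)
    have hpp : ((t : ℝ) + 2) * (P.coeff (t + 1) * (X * P).coeff t) ≤
        (t + 1) * (P.coeff t * P.coeff t) := by nlinarith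
    nlinarith [mul_le_mul_of_nonneg_left (hP.mul_le t) (mul_nonneg hq hq),
      mul_le_mul_of_nonneg_left hpp (mul_nonneg hp hp),
      mul_le_mul_of_nonneg_left (hP.mul_coeff_X_mul_le_mul t) (mul_nonneg hp hq)]
  · have hsplit (x : ℕ) (hx : 0 < ((C p * X + C q) * P).coeff x) :
        (0 < p ∧ 0 < (X * P).coeff x) ∨ (0 < q ∧ 0 < P.coeff x) := by
      rw [hcoeff] at hx
      rcases (mul_nonneg hp (hX x)).eq_or_lt with h | h
      · right
        rw [← h, zero_add] at hx
        exact ⟨pos_of_mul_pos_left hx (hP.nonneg x), pos_of_mul_pos_right hx hq⟩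
      · exact .inl ⟨pos_of_mul_pos_left h (hX x), pos_of_mul_pos_right h hp⟩
    have hX_pos (x : ℕ) (hp : 0 < p) (hx : 0 < (X * P).coeff x) :
        0 < ((C p * X + C q) * P).coeff x := by
      rw [hcoeff]; exact add_pos_of_pos_of_nonneg (mul_pos hp hx) (mul_nonneg hq (hP.nonneg x))
    have hP_pos (x : ℕ) (hq : 0 < q) (hx : 0 < P.coeff x) :
        0 < ((C p * X + C q) * P).coeff x := by
      rw [hcoeff]; exact add_pos_of_nonneg_of_pos (mul_nonneg hp (hX x)) (mul_pos hq hx)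
    rcases hsplit s hs with ⟨hp, hs⟩ | ⟨hq, hs⟩ <;> rcases hsplit r hr with ⟨hp', hr⟩ | ⟨hq', hr⟩
    · obtain ⟨s', rfl, hs'⟩ := exists_eq_add_one_of_coeff_X_mul_pos hs
      obtain ⟨r', rfl, hr'⟩ := exists_eq_add_one_of_coeff_X_mul_pos hr
      obtain ⟨t, rfl⟩ : ∃ t', t = t' + 1 := ⟨t - 1, by omega⟩
      refine hX_pos _ hp ?_
      rw [coeff_X_mul]
      exact hP.pos_of_le_of_le (by omega) (by omega) hs' hr'
    · obtain ⟨s', rfl, hs'⟩ := exists_eq_add_one_of_coeff_X_mul_pos hs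
      exact hP_pos t hq' (hP.pos_of_le_of_le (by omega) htr hs' hr)
    · obtain ⟨r', rfl, hr'⟩ := exists_eq_add_one_of_coeff_X_mul_pos hr
      rcases htr.eq_or_lt with rfl | htr
      · exact hX_pos _ hp' hr
      · exact hP_pos t hq (hP.pos_of_le_of_le hst (by omega) hs hr')
    · exact hP_pos t hq (hP.pos_of_le_of_le hst htr hs hr)

theorem div_logConcave {a b : ℕ → ℝ} (ha : UltraLogConcave a)
    (hb : ∀ t, 0 < b t)
    (hb_eq : ∀ t : ℕ, ((t : ℝ) + 2) * (b (t + 2) * b t) = ((t : ℝ) + 1) * (b (t + 1) * b (t + 1)))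
    (t : ℕ) : a t / b t * (a (t + 2) / b (t + 2)) ≤ (a (t + 1) / b (t + 1)) ^ 2 := by
  have h := ha.mul_le t
  have h' := hb_eq t
  have := hb t
  have := hb (t + 1)
  have := hb (t + 2)
  rw [div_mul_div_comm, div_pow, div_le_div_iff₀ (by positivity) (by positivity)]
  have hpos : 0 < ((t : ℝ) + 2) * (b (t + 2) * b t) := by positivity
  nlinarith [ha.nonneg t, ha.nonneg (t + 2)]

theorem single_crossing {a b : ℕ → ℝ} (ha : UltraLogConcave a)
    (hb : ∀ t, 0 < b t)
    (hb_eq : ∀ t : ℕ, ((t : ℝ) + 2) * (b (t + 2) * b t) = ((t : ℝ) + 1) * (b (t + 1) * b (t + 1)))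
    {A B : ℝ} (hA : 0 < A) (hB : 0 < B) {s t k : ℕ} (hst : s ≤ t) (htk : t ≤ k)
    (hs : 0 < B * a s - A * b s) (hk : 0 < B * a k - A * b k) : 0 ≤ B * a t - A * b t := by
  have hle_div (x : ℕ) : A / B ≤ a x / b x ↔ 0 ≤ B * a x - A * b x := by
    rw [div_le_div_iff₀ hB (hb x), sub_nonneg, mul_comm B]
  have hpos_of (x : ℕ) (hx : 0 < B * a x - A * b x) : 0 < a x :=
    pos_of_mul_pos_right (by nlinarith [hb x]) hB.le
  refine (hle_div t).1 (le_of_logConcave (ha.div_logConcave hb hb_eq) (fun x hx => ?_)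
    ((hle_div s).2 hs.le) ((hle_div k).2 hk.le) t (mem_Icc.2 ⟨hst, htk⟩))
  rw [mem_Icc] at hx
  exact div_pos (ha.pos_of_le_of_le hx.1 hx.2 (hpos_of s hs) (hpos_of k hk)) (hb x)

end UltraLogConcave

theorem ultraLogConcave_coeff_prod {E : Type*} (p : E → ℝ) (hp : ∀ e, 0 ≤ p e ∧ p e ≤ 1)
    (s : Finset E) : UltraLogConcave (∏ e ∈ s, (C (p e) * X + C (1 - p e))).coeff := by
  classical
  induction s using Finset.induction_on with
  | empty =>
    rw [prod_empty]
    refine ⟨fun t => ?_, fun t => ?_, fun s t r hst htr hs hr => ?_⟩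
    · rw [coeff_one]; positivity
    · simp [coeff_one]
    · obtain rfl : r = 0 := by by_contra h; simp [coeff_one, h] at hr
      simp [Nat.le_zero.mp htr]
  | insert e s he ih =>
    rw [prod_insert he]
    exact ih.C_mul_X_add_C_mul (hp e).1 (sub_nonneg.2 (hp e).2)

theorem poisson_mul_add_two {lam : ℝ} {b : ℕ → ℝ}
    (hb : ∀ t, b t = Real.exp (-lam) * lam ^ t / (t.factorial : ℝ)) (t : ℕ) :
    ((t : ℝ) + 2) * (b (t + 2) * b t) = ((t : ℝ) + 1) * (b (t + 1) * b (t + 1)) := by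
  simp only [hb, Nat.factorial_succ]
  push_cast
  field_simp
  ring

theorem nonpos_of_sum_eq_zero_of_sum_mul_nonpos {d : ℕ → ℝ} {k : ℕ}
    (hsum : ∑ t ∈ range (k + 1), d t = 0) (hmom : ∑ t ∈ range (k + 1), (t : ℝ) * d t ≤ 0)
    (hcross : ∀ s t, s ≤ t → t ≤ k → 0 < d s → 0 < d k → 0 ≤ d t) : d k ≤ 0 := by
  by_contra! hk
  classical
  have hex : ∃ i, 0 < d i := ⟨k, hk⟩
  set i := Nat.find hex
  have hik : i ≤ k := Nat.find_min' hex hk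
  -- with `i` the first index where `d` is positive, every term of `∑ (t - (i - 1)) d t` is
  -- nonnegative and the last one is positive
  have hterm : ∀ t ∈ range (k + 1), 0 ≤ ((t : ℝ) - (i - 1)) * d t := by
    intro t ht
    rcases lt_or_ge t i with h | h
    · have : (t : ℝ) + 1 ≤ i := by exact_mod_cast h
      exact mul_nonneg_of_nonpos_of_nonpos (by linarith) (not_lt.1 (Nat.find_min hex h))
    · have : (i : ℝ) ≤ t := by exact_mod_cast h
      exact mul_nonneg (by linarith)
        (hcross i t h (Nat.lt_succ_iff.1 (mem_range.1 ht)) (Nat.find_spec hex) hk)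
  have hlast := single_le_sum hterm (self_mem_range_succ k)
  have hshift : ∑ t ∈ range (k + 1), ((t : ℝ) - (i - 1)) * d t =
      ∑ t ∈ range (k + 1), (t : ℝ) * d t - (i - 1) * ∑ t ∈ range (k + 1), d t := by
    simp only [sub_mul, sum_sub_distrib, mul_sum]
  have : (i : ℝ) ≤ k := by exact_mod_cast hik
  rw [hshift, hsum] at hlast
  nlinarith

theorem stmt_7_general {E : Type*} [Fintype E] [DecidableEq E]
    -- T = Σ_e Y_e is a Poisson-binomial sum of independent Bernoullis with parameters p,
    -- so P[T = t] = a t, where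
    (p : E → ℝ) (hp : ∀ e, 0 ≤ p e ∧ p e ≤ 1)
    (a : ℕ → ℝ)
    (ha : ∀ t, a t = ∑ S ∈ Finset.powersetCard t (univ : Finset E),
        (∏ e ∈ S, p e) * ∏ e ∈ Sᶜ, (1 - p e))
    -- Q is Poisson with (arbitrary nonnegative) mean lam, so P[Q = t] = b t, where
    (lam : ℝ) (hlam : 0 ≤ lam)
    (b : ℕ → ℝ)
    (hb : ∀ t, b t = Real.exp (-lam) * lam ^ t / (t.factorial : ℝ))
    (k : ℕ)
    -- P[T ≤ k] > 0
    (hpos : 0 < ∑ t ∈ range (k + 1), a t)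
    -- E[T | T ≤ k] ≤ E[Q | Q ≤ k]
    (hmean : (∑ t ∈ range (k + 1), (t : ℝ) * a t) / (∑ t ∈ range (k + 1), a t) ≤
             (∑ t ∈ range (k + 1), (t : ℝ) * b t) / (∑ t ∈ range (k + 1), b t)) :
    -- P[T < k | T ≤ k] ≥ P[Q < k | Q ≤ k]
    (∑ t ∈ range k, b t) / (∑ t ∈ range (k + 1), b t) ≤
      (∑ t ∈ range k, a t) / (∑ t ∈ range (k + 1), a t) := by
  have hulc : UltraLogConcave a := by
    convert ultraLogConcave_coeff_prod p hp univ
    ext t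
    rw [ha, coeff_prod_C_mul_X_add_C]
    simp_rw [compl_eq_univ_sdiff]
  have hb_nonneg (t : ℕ) : 0 ≤ b t := by rw [hb]; positivity
  set A := ∑ t ∈ range (k + 1), a t
  set B := ∑ t ∈ range (k + 1), b t
  have hB : 0 < B := sum_pos' (fun t _ => hb_nonneg t) ⟨0, by simp, by simp [hb, Real.exp_pos]⟩
  rw [div_le_div_iff₀ hpos hB] at hmean
  rw [div_le_div_iff₀ hB hpos, show ∑ t ∈ range k, b t = B - b k by simp [B, sum_range_succ],
    show ∑ t ∈ range k, a t = A - a k by simp [A, sum_range_succ]]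
  suffices B * a k - A * b k ≤ 0 by linarith
  refine nonpos_of_sum_eq_zero_of_sum_mul_nonpos (d := fun t => B * a t - A * b t) ?_ ?_ ?_
  · simp only [sum_sub_distrib, ← mul_sum, A, B]; ring
  · simp only [mul_sub, sum_sub_distrib, mul_left_comm _ B, mul_left_comm _ A, ← mul_sum]
    linarith
  · intro s t hst htk hs hk
    rcases hlam.eq_or_lt with rfl | hlam
    · cases t with
      | zero => obtain rfl := Nat.le_zero.1 hst; exact hs.le
      | succ t => simpa [hb] using mul_nonneg hB.le (hulc.nonneg (t + 1))
    · exact hulc.single_crossing (fun t => by rw [hb]; positivity) (poisson_mul_add_two hb)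
        hpos hB hst htk hs hk

theorem stmt_7 {E : Type*} [Fintype E] [DecidableEq E]
    -- T = Σ_e Y_e is a Poisson-binomial sum of independent Bernoullis with parameters p,
    -- so P[T = t] = a t, where
    (p : E → ℝ) (hp : ∀ e, 0 ≤ p e ∧ p e ≤ 1)
    (a : ℕ → ℝ)
    (ha : ∀ t, a t = ∑ S ∈ Finset.powersetCard t (univ : Finset E),
        (∏ e ∈ S, p e) * ∏ e ∈ Sᶜ, (1 - p e))
    -- Q is Poisson with (arbitrary nonnegative) mean lam, so P[Q = t] = b t, where
    (lam : ℝ) (hlam : 0 ≤ lam)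
    (b : ℕ → ℝ)
    (hb : ∀ t, b t = Real.exp (-lam) * lam ^ t / (t.factorial : ℝ))
    (k : ℕ) (hk : 1 ≤ k)
    -- P[T ≤ k] > 0
    (hpos : 0 < ∑ t ∈ range (k + 1), a t)
    -- E[T | T ≤ k] ≤ E[Q | Q ≤ k]
    (hmean : (∑ t ∈ range (k + 1), (t : ℝ) * a t) / (∑ t ∈ range (k + 1), a t) ≤
             (∑ t ∈ range (k + 1), (t : ℝ) * b t) / (∑ t ∈ range (k + 1), b t)) :
    -- P[T < k | T ≤ k] ≥ P[Q < k | Q ≤ k]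
    (∑ t ∈ range k, b t) / (∑ t ∈ range (k + 1), b t) ≤
      (∑ t ∈ range k, a t) / (∑ t ∈ range (k + 1), a t) :=
  stmt_7_general p hp a ha lam hlam b hb k hpos hmean
end

section
/- Fix integers n ≥ k ≥ 1 and set q = k/n. Let E be a ground set with |E| = n and x_e = q for all e ∈ E, and let F = {S ⊆ E : |S| ≤ k}. Let μ be any probability distribution on F such that for every e ∈ E and every T ⊆ E∖{e} with |T| ≤ k and P_{S∼μ}[S∖{e} = T] > 0, P_{S∼μ}[e ∈ S | S∖{e} = T] ≤ q. Then min_{e∈E} P_{S∼μ}[e ∈ S]/q ≤ P[Bin(n−1, q) < k] / P[Bin(n, q) ≤ k]. Consequently, any stationary OCRS for the k-uniform matroid has selectability at most P[Bin(n−1,q)<k]/P[Bin(n,q)≤k] on this instance, and letting n → ∞ this bound converges to α_k = P[Poisson(k) < k]/P[Poisson(k) ≤ k], so no stationary OCRS for the k-uniform matroid is better than α_k-selectable. -/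
/-!
Write `p j` for the probability that `|S| = j` and `b j` for the `Bin(n, q)` probabilities.
Summing the stationarity constraint `(1 - q) μ (T ∪ {e}) ≤ q μ T` over all pairs `(T, e)` with
`|T| = j`, `e ∉ T` gives `(1 - q) (j + 1) p (j + 1) ≤ q (n - j) p j`, which says exactly that the
likelihood ratio `p j / b j` is nonincreasing on `{0, …, k}`. By Chebyshev's sum inequality the
mean `∑ⱼ j p j = ∑ₑ P[e ∈ S]` is then at most the mean of `Bin(n, q)` conditioned on being at most
`k`, which is `n q P[Bin(n-1, q) < k] / P[Bin(n, q) ≤ k]`, and some `e` is at most the average.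
The limit is the Poisson limit theorem applied term by term.
-/

open Finset Filter Topology

def binomProb (n : ℕ) (q : ℝ) (j : ℕ) : ℝ := n.choose j * q ^ j * (1 - q) ^ (n - j)

theorem sum_range_binomProb (n : ℕ) (q : ℝ) : ∑ j ∈ range (n + 1), binomProb n q j = 1 := by
  have := add_pow q (1 - q) n
  rw [add_sub_cancel, one_pow] at this
  rw [this]
  exact sum_congr rfl fun j _ => by rw [binomProb]; ring

theorem binomProb_pos {n j : ℕ} {q : ℝ} (hq₀ : 0 < q) (hq₁ : q < 1) (hj : j ≤ n) :
    0 < binomProb n q j := by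
  have : (0 : ℝ) < n.choose j := by exact_mod_cast Nat.choose_pos hj
  have : 0 < 1 - q := sub_pos.mpr hq₁
  unfold binomProb
  positivity

theorem succ_mul_one_sub_mul_binomProb_succ {n j : ℕ} (q : ℝ) (hj : j < n) :
    ((j : ℝ) + 1) * (1 - q) * binomProb n q (j + 1) = ((n : ℝ) - j) * q * binomProb n q j := by
  have hchoose : (n.choose (j + 1) : ℝ) * (j + 1) = n.choose j * ((n : ℝ) - j) := by
    rw [← Nat.cast_sub hj.le]; exact_mod_cast Nat.choose_succ_right_eq n j
  have hexp : n - j = n - (j + 1) + 1 := by omega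
  unfold binomProb
  rw [hexp, pow_succ, pow_succ]
  linear_combination q ^ j * q * (1 - q) ^ (n - (j + 1)) * (1 - q) * hchoose

theorem succ_mul_binomProb_succ (n j : ℕ) (q : ℝ) :
    ((j : ℝ) + 1) * binomProb n q (j + 1) = n * q * binomProb (n - 1) q j := by
  unfold binomProb
  rcases n with _ | m
  · simp
  · have hchoose : ((m : ℝ) + 1) * m.choose j = (m + 1).choose (j + 1) * ((j : ℝ) + 1) := by
      exact_mod_cast Nat.add_one_mul_choose_eq m j
    rw [Nat.add_sub_cancel, Nat.add_sub_add_right]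
    push_cast
    linear_combination q ^ (j + 1) * (1 - q) ^ (m - j) * hchoose.symm

theorem sum_range_mul_binomProb (n k : ℕ) (q : ℝ) :
    ∑ j ∈ range (k + 1), (j : ℝ) * binomProb n q j =
      n * q * ∑ t ∈ range k, binomProb (n - 1) q t := by
  rw [sum_range_succ', mul_sum]
  simp only [Nat.cast_zero, zero_mul, add_zero, Nat.cast_succ, succ_mul_binomProb_succ]

theorem tendsto_choose_sub_mul_div_pow (r : ℝ) (d t : ℕ) :
    Tendsto (fun m : ℕ => ((m - d).choose t : ℝ) * (r / m) ^ t * (1 - r / m) ^ (m - d - t))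
      atTop (𝓝 (Real.exp (-r) * r ^ t / t.factorial)) := by
  -- the Poisson limit theorem for `Bin(n, r / (n + d))`, reindexed by `n = m - d`
  have hmean : Tendsto (fun n : ℕ => n * (r / (n + d : ℕ))) atTop (𝓝 r) := by
    have := (tendsto_natCast_div_add_atTop (d : ℝ)).const_mul r
    rw [mul_one] at this
    refine this.congr fun n => ?_
    push_cast
    ring
  refine ((ProbabilityTheory.tendsto_choose_mul_pow_of_tendsto_mul_atTop t hmean).comp
    (tendsto_sub_atTop_nat d)).congr' ?_
  filter_upwards [eventually_ge_atTop d] with m hm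
  simp only [Function.comp_apply, Nat.sub_add_cancel hm]

theorem tendsto_binomial_cdf_ratio (a b : ℕ) {r : ℝ} (hr : 0 ≤ r) :
    Tendsto (fun m : ℕ =>
        (∑ t ∈ range a, ((m - 1).choose t : ℝ) * (r / m) ^ t * (1 - r / m) ^ (m - 1 - t)) /
          ∑ t ∈ range (b + 1), (m.choose t : ℝ) * (r / m) ^ t * (1 - r / m) ^ (m - t))
      atTop (𝓝 ((∑ t ∈ range a, Real.exp (-r) * r ^ t / (t.factorial : ℝ)) /
        ∑ t ∈ range (b + 1), Real.exp (-r) * r ^ t / (t.factorial : ℝ))) := by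
  have hpos : 0 < ∑ t ∈ range (b + 1), Real.exp (-r) * r ^ t / (t.factorial : ℝ) := by
    rw [sum_range_succ']
    exact add_pos_of_nonneg_of_pos (sum_nonneg fun t _ => by positivity) (by simp [Real.exp_pos])
  refine Tendsto.div (tendsto_finsetSum _ fun t _ => tendsto_choose_sub_mul_div_pow r 1 t)
    (tendsto_finsetSum _ fun t _ => ?_) hpos.ne'
  simpa using tendsto_choose_sub_mul_div_pow r 0 t

theorem Finset.sum_mul_sum_le_of_monotoneOn_of_antitoneOn_div {ι : Type*} [LinearOrder ι]
    {s : Finset ι} {f p b : ι → ℝ} (hf : MonotoneOn f s)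
    (hpb : AntitoneOn (fun i => p i / b i) s) (hb : ∀ i ∈ s, 0 < b i) :
    (∑ i ∈ s, f i * p i) * ∑ i ∈ s, b i ≤ (∑ i ∈ s, f i * b i) * ∑ i ∈ s, p i := by
  have cross_le : ∀ i ∈ s, ∀ j ∈ s, i ≤ j → p j * b i ≤ p i * b j := fun i hi j hj hij =>
    (div_le_div_iff₀ (hb j hj) (hb i hi)).mp (hpb hi hj hij)
  have pair_nonpos : ∀ i ∈ s, ∀ j ∈ s, (b i * p j - b j * p i) * (f j - f i) ≤ 0 := by
    intro i hi j hj
    rcases le_total i j with hij | hji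
    · exact mul_nonpos_of_nonpos_of_nonneg (by linarith [cross_le i hi j hj hij])
        (sub_nonneg.mpr (hf hi hj hij))
    · exact mul_nonpos_of_nonneg_of_nonpos (by linarith [cross_le j hj i hi hji])
        (sub_nonpos.mpr (hf hj hi hji))
  have half : ∑ i ∈ s, ∑ j ∈ s, b i * p j * (f j - f i) =
      (∑ i ∈ s, f i * p i) * ∑ i ∈ s, b i - (∑ i ∈ s, f i * b i) * ∑ i ∈ s, p i := by
    simp only [mul_sub, sum_sub_distrib, sum_mul_sum]
    rw [sum_comm]
    congr 1 <;> refine sum_congr rfl fun i _ => sum_congr rfl fun j _ => by ring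
  have symmetrize : ∑ i ∈ s, ∑ j ∈ s, (b i * p j - b j * p i) * (f j - f i) =
      2 * ∑ i ∈ s, ∑ j ∈ s, b i * p j * (f j - f i) := by
    have swap := sum_comm (s := s) (t := s) (f := fun j i => b i * p j * (f j - f i))
    simp only [two_mul]
    conv_rhs => arg 2; rw [← swap]
    rw [← sum_add_distrib]
    refine sum_congr rfl fun i _ => ?_
    rw [← sum_add_distrib]
    refine sum_congr rfl fun j _ => by ring
  have := sum_nonpos fun i hi => sum_nonpos fun j hj => pair_nonpos i hi j hj
  linarith

theorem one_sub_mul_le_mul_of_div_le {a b q : ℝ} (ha : 0 ≤ a) (hb : 0 ≤ b)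
    (h : 0 < a + b → b / (a + b) ≤ q) : (1 - q) * b ≤ q * a := by
  rcases (add_nonneg ha hb).lt_or_eq with hpos | hzero
  · have := (div_le_iff₀ hpos).mp (h hpos)
    linarith
  · obtain ⟨rfl, rfl⟩ : a = 0 ∧ b = 0 := ⟨by linarith, by linarith⟩
    simp

section CardMass

variable {E : Type*} [Fintype E]

def cardMass (μ : Finset E → ℝ) (j : ℕ) : ℝ := ∑ S : Finset E with S.card = j, μ S

theorem sum_range_mul_cardMass (μ : Finset E → ℝ) {k : ℕ} (hμ : ∀ S, μ S ≠ 0 → S.card ≤ k)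
    (f : ℕ → ℝ) : ∑ j ∈ range (k + 1), f j * cardMass μ j = ∑ S, f S.card * μ S := by
  calc ∑ j ∈ range (k + 1), f j * cardMass μ j
      = ∑ j ∈ range (k + 1), ∑ S with S.card = j, f S.card * μ S := by
        refine sum_congr rfl fun j _ => ?_
        rw [cardMass, mul_sum]
        exact sum_congr rfl fun S hS => by rw [(mem_filter.1 hS).2]
    _ = ∑ S with S.card ∈ range (k + 1), f S.card * μ S := sum_fiberwise_eq_sum_filter ..
    _ = ∑ S, f S.card * μ S := sum_filter_of_ne fun S _ hS =>
        mem_range_succ_iff.mpr (hμ S (right_ne_zero_of_mul hS))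

theorem sum_sum_mem_eq_sum_card_mul [DecidableEq E] (μ : Finset E → ℝ) :
    ∑ e, ∑ S with e ∈ S, μ S = ∑ S, (S.card : ℝ) * μ S := by
  simp only [sum_filter]
  rw [sum_comm]
  refine sum_congr rfl fun S _ => ?_
  rw [sum_ite_mem, univ_inter, sum_const, nsmul_eq_mul]

theorem succ_mul_cardMass_succ [DecidableEq E] (μ : Finset E → ℝ) (i : ℕ) :
    ((i : ℝ) + 1) * cardMass μ (i + 1) = ∑ T with T.card = i, ∑ e ∈ Tᶜ, μ (insert e T) := by
  have hS : ∀ S ∈ ({S | S.card = i + 1} : Finset (Finset E)),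
      ((i : ℝ) + 1) * μ S = ∑ _e ∈ S, μ S := by
    intro S hS
    rw [sum_const, nsmul_eq_mul, (mem_filter.1 hS).2, Nat.cast_succ]
  rw [cardMass, mul_sum, sum_congr rfl hS, sum_sigma', sum_sigma']
  symm
  refine sum_nbij' (fun x => ⟨insert x.2 x.1, x.2⟩) (fun y => ⟨y.1.erase y.2, y.2⟩)
    ?_ ?_ ?_ ?_ fun _ _ => rfl
  · rintro ⟨T, e⟩ h
    simp only [mem_sigma, mem_filter_univ, mem_compl] at h ⊢
    exact ⟨by rw [card_insert_of_notMem h.2, h.1], mem_insert_self e T⟩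
  · rintro ⟨S, e⟩ h
    simp only [mem_sigma, mem_filter_univ, mem_compl] at h ⊢
    exact ⟨by rw [card_erase_of_mem h.2, h.1, Nat.add_sub_cancel], notMem_erase e S⟩
  · rintro ⟨T, e⟩ h
    simp only [mem_sigma, mem_compl] at h
    simp [erase_insert h.2]
  · rintro ⟨S, e⟩ h
    simp only [mem_sigma] at h
    simp [insert_erase h.2]

theorem one_sub_mul_succ_mul_cardMass_succ_le [DecidableEq E] {μ : Finset E → ℝ} {q : ℝ} {i : ℕ}
    (hstep : ∀ e T, e ∉ T → T.card = i → (1 - q) * μ (insert e T) ≤ q * μ T) :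
    (1 - q) * (((i : ℝ) + 1) * cardMass μ (i + 1)) ≤
      q * ((Fintype.card E - i : ℝ) * cardMass μ i) := by
  have hcompl : (Fintype.card E - i : ℝ) * cardMass μ i = ∑ T with T.card = i, ∑ _e ∈ Tᶜ, μ T := by
    rw [cardMass, mul_sum]
    refine sum_congr rfl fun T hT => ?_
    rw [sum_const, nsmul_eq_mul, card_compl, Nat.cast_sub (card_le_univ T), (mem_filter.1 hT).2]
  rw [succ_mul_cardMass_succ, hcompl, mul_sum, mul_sum]
  refine sum_le_sum fun T hT => ?_
  rw [mul_sum, mul_sum]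
  exact sum_le_sum fun e he => hstep e T (mem_compl.1 he) (mem_filter.1 hT).2

theorem antitoneOn_cardMass_div_binomProb [DecidableEq E] {μ : Finset E → ℝ} {q : ℝ} {k : ℕ}
    (hq₀ : 0 < q) (hq₁ : q < 1) (hk : k ≤ Fintype.card E)
    (hstep : ∀ e T, e ∉ T → T.card < k → (1 - q) * μ (insert e T) ≤ q * μ T) :
    AntitoneOn (fun j => cardMass μ j / binomProb (Fintype.card E) q j) (range (k + 1)) := by
  set n := Fintype.card E
  rw [coe_range]
  refine antitoneOn_of_succ_le Set.ordConnected_Iio fun i _ _ hi => ?_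
  simp only [Order.succ_eq_add_one, Set.mem_Iio] at hi ⊢
  have hin : i < n := by omega
  have hb := binomProb_pos hq₀ hq₁ hin.le
  have hb' := binomProb_pos (j := i + 1) hq₀ hq₁ hin
  have hrec := one_sub_mul_succ_mul_cardMass_succ_le (i := i) fun e T he hT => hstep e T he (by omega)
  have hni : (0 : ℝ) < n - i := sub_pos.mpr (by exact_mod_cast hin)
  show cardMass μ (i + 1) / binomProb n q (i + 1) ≤ cardMass μ i / binomProb n q i
  rw [div_le_div_iff₀ hb' hb, ← mul_le_mul_iff_right₀ (mul_pos hni hq₀)]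
  calc (n - i) * q * (cardMass μ (i + 1) * binomProb n q i)
      = (1 - q) * ((i + 1) * cardMass μ (i + 1)) * binomProb n q (i + 1) := by
        linear_combination cardMass μ (i + 1) * (succ_mul_one_sub_mul_binomProb_succ q hin).symm
    _ ≤ q * ((n - i) * cardMass μ i) * binomProb n q (i + 1) := by gcongr
    _ = (n - i) * q * (cardMass μ i * binomProb n q (i + 1)) := by ring

end CardMass

theorem exists_sum_mem_div_le_binomial_ratio {E : Type*} [Fintype E] [DecidableEq E] [Nonempty E]
    {μ : Finset E → ℝ} {q : ℝ} {k : ℕ} (hq₀ : 0 < q) (hq₁ : q < 1) (hk : k ≤ Fintype.card E)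
    (hsum : ∑ S, μ S = 1) (hsupp : ∀ S, μ S ≠ 0 → S.card ≤ k)
    (hstep : ∀ e T, e ∉ T → T.card < k → (1 - q) * μ (insert e T) ≤ q * μ T) :
    ∃ e, (∑ S with e ∈ S, μ S) / q ≤
      (∑ t ∈ range k, binomProb (Fintype.card E - 1) q t) /
        ∑ t ∈ range (k + 1), binomProb (Fintype.card E) q t := by
  have hb : ∀ j ∈ range (k + 1), 0 < binomProb (Fintype.card E) q j := fun j hj =>
    binomProb_pos hq₀ hq₁ (by rw [mem_range] at hj; omega)
  have hB : 0 < ∑ j ∈ range (k + 1), binomProb (Fintype.card E) q j := sum_pos hb nonempty_range_add_one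
  have hcheb := sum_mul_sum_le_of_monotoneOn_of_antitoneOn_div (f := Nat.cast)
    (Nat.mono_cast.monotoneOn _) (antitoneOn_cardMass_div_binomProb hq₀ hq₁ hk hstep) hb
  have htotal : ∑ j ∈ range (k + 1), cardMass μ j = 1 := by
    simpa [hsum] using sum_range_mul_cardMass μ hsupp 1
  rw [sum_range_mul_cardMass μ hsupp, ← sum_sum_mem_eq_sum_card_mul, sum_range_mul_binomProb,
    htotal, mul_one, ← le_div_iff₀ hB] at hcheb
  have hsum_le : ∑ e, ∑ S with e ∈ S, μ S ≤ ∑ _e : E, q *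
      ((∑ t ∈ range k, binomProb (Fintype.card E - 1) q t) /
        ∑ j ∈ range (k + 1), binomProb (Fintype.card E) q j) := by
    rw [sum_const, card_univ, nsmul_eq_mul]
    exact hcheb.trans_eq (by ring)
  obtain ⟨e, -, he⟩ := exists_le_of_sum_le univ_nonempty hsum_le
  exact ⟨e, by rwa [div_le_iff₀' hq₀]⟩

theorem stmt_10 {E : Type*} [Fintype E] [DecidableEq E]
    (n k : ℕ) (hk : 1 ≤ k) (hkn : k ≤ n)
    (hcard : Fintype.card E = n)
    (μ : Finset E → ℝ)
    (hnn : ∀ S, 0 ≤ μ S)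
    (hsum : (∑ S : Finset E, μ S) = 1)
    (hsupp : ∀ S, μ S ≠ 0 → S.card ≤ k)
    -- stationary implementability with activation probabilities x_e = q = k/n
    (hstat : ∀ e : E, ∀ T : Finset E, T.card ≤ k → e ∉ T →
      0 < μ T + μ (insert e T) →
      μ (insert e T) / (μ T + μ (insert e T)) ≤ (k : ℝ) / (n : ℝ)) :
    -- min_e P[e ∈ S]/q  ≤  P[Bin(n−1,q) < k] / P[Bin(n,q) ≤ k]
    (∃ e : E, (∑ S ∈ univ.filter (fun S => e ∈ S), μ S) / ((k : ℝ) / (n : ℝ)) ≤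
      (∑ t ∈ range k,
          ((n - 1).choose t : ℝ) * ((k : ℝ) / n) ^ t * (1 - (k : ℝ) / n) ^ (n - 1 - t)) /
      (∑ t ∈ range (k + 1),
          (n.choose t : ℝ) * ((k : ℝ) / n) ^ t * (1 - (k : ℝ) / n) ^ (n - t)))
    -- and as n → ∞ this upper bound converges to α_k = P[Poisson(k) < k]/P[Poisson(k) ≤ k]
    ∧ Filter.Tendsto
        (fun m : ℕ =>
          (∑ t ∈ range k,
              ((m - 1).choose t : ℝ) * ((k : ℝ) / m) ^ t * (1 - (k : ℝ) / m) ^ (m - 1 - t)) /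
          (∑ t ∈ range (k + 1),
              (m.choose t : ℝ) * ((k : ℝ) / m) ^ t * (1 - (k : ℝ) / m) ^ (m - t)))
        Filter.atTop
        (nhds ((∑ t ∈ range k, Real.exp (-(k : ℝ)) * (k : ℝ) ^ t / (t.factorial : ℝ)) /
               (∑ t ∈ range (k + 1), Real.exp (-(k : ℝ)) * (k : ℝ) ^ t / (t.factorial : ℝ)))) := by
  refine ⟨?_, tendsto_binomial_cdf_ratio k k k.cast_nonneg⟩
  have : Nonempty E := Fintype.card_pos_iff.mp (by omega)
  subst hcard
  rcases hkn.lt_or_eq with hlt | hkE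
  · have hE : (0 : ℝ) < Fintype.card E := Nat.cast_pos.mpr (by omega)
    exact exists_sum_mem_div_le_binomial_ratio (by positivity)
      ((div_lt_one hE).mpr (by exact_mod_cast hlt)) hkn hsum hsupp fun e T he hT =>
        one_sub_mul_le_mul_of_div_le (hnn _) (hnn _) (hstat e T hT.le he)
  · -- `q = 1`: both binomial sums are complete, so the bound is `1`
    obtain ⟨e⟩ := ‹Nonempty E›
    have hq : (k : ℝ) / Fintype.card E = 1 := by
      rw [hkE, div_self (Nat.cast_ne_zero.mpr (by omega))]
    have hprob : ∑ S with e ∈ S, μ S ≤ 1 :=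
      hsum ▸ sum_le_sum_of_subset_of_nonneg (filter_subset _ _) fun S _ _ => hnn S
    refine ⟨e, ?_⟩
    rw [hq]
    change _ ≤ (∑ t ∈ range k, binomProb (Fintype.card E - 1) 1 t) /
      ∑ t ∈ range (k + 1), binomProb (Fintype.card E) 1 t
    rw [← hkE]
    obtain ⟨m, rfl⟩ : ∃ m, k = m + 1 := ⟨k - 1, by omega⟩
    simpa only [Nat.add_sub_cancel, sum_range_binomProb, div_one] using hprob
end

section
/- Let μ be a Rayleigh probability measure supported on a family B of subsets of a finite set E, all of the same size r, with marginals q_e = P_{B∼μ}[e ∈ B]. Sample B ∼ μ and then include each element of B independently with probability 1/2; let S denote the resulting random subset. Then for every e ∈ E, P[e ∈ S] = q_e/2, and for every e ∈ E and every T ⊆ E∖{e} with P[S∖{e} = T] > 0, P[e ∈ S | S∖{e} = T] ≤ q_e. -/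
/-!
A set `A` of size `r` containing `e` has `2 ^ (r - 1)` subsets containing `e`, so the thinning
keeps `e` with probability `q_e / 2`. For the conditional bound, the common factor `2⁻ʳ` cancels
and `P[e ∈ S | S \ {e} = T] = a / (b + a)` with `a = P[T ∪ {e} ⊆ B]` and `b = P[T ⊆ B]`; the
Rayleigh inequality for the untilted measure gives `a ≤ b q_e`.
-/

open Finset

/-- Probability of the event `P` under the tilt of the measure `μ` by the weight vector `w`:
`μ_w(A) ∝ μ(A) · ∏_{e∈A} w_e`. -/
noncomputable def tiltProb {E : Type*} [Fintype E] [DecidableEq E]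
    (μ : Finset E → ℝ) (w : E → ℝ) (P : Finset E → Prop) [DecidablePred P] : ℝ :=
  (∑ A ∈ univ.filter P, μ A * ∏ e ∈ A, w e) / (∑ A : Finset E, μ A * ∏ e ∈ A, w e)

/-- `μ` is Rayleigh: every positive tilt of `μ` satisfies the Rayleigh inequality
`P[T ⊆ B] · P[e ∈ B] ≥ P[T ∪ {e} ⊆ B]`. -/
def IsRayleigh {E : Type*} [Fintype E] [DecidableEq E] (μ : Finset E → ℝ) : Prop :=
  ∀ w : E → ℝ, (∀ e, 0 < w e) → ∀ e : E, ∀ T : Finset E, e ∉ T →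
    tiltProb μ w (fun A => insert e T ⊆ A) ≤
      tiltProb μ w (fun A => T ⊆ A) * tiltProb μ w (fun A => e ∈ A)

section

variable {E : Type*} [DecidableEq E]

lemma card_filter_mem_powerset {A : Finset E} {e : E} (he : e ∈ A) :
    #{T ∈ A.powerset | e ∈ T} = 2 ^ (#A - 1) := by
  rw [← card_erase_of_mem he, ← card_powerset]
  refine card_nbij' (·.erase e) (insert e) (fun T hT => ?_) (fun T hT => ?_)
    (fun T hT => insert_erase (mem_filter.1 hT).2) (fun T hT => erase_insert fun h => ?_)
  · exact mem_powerset.2 (erase_subset_erase e (mem_powerset.1 (mem_filter.1 hT).1))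
  · exact mem_filter.2 ⟨mem_powerset.2 (insert_subset he ((mem_powerset.1 hT).trans
      (erase_subset e A))), mem_insert_self e T⟩
  · simpa using mem_powerset.1 hT h

lemma two_mul_card_filter_mem_powerset (A : Finset E) (e : E) :
    2 * #{T ∈ A.powerset | e ∈ T} = if e ∈ A then 2 ^ #A else 0 := by
  split_ifs with he
  · rw [card_filter_mem_powerset he, ← pow_succ', Nat.sub_add_cancel (card_pos.2 ⟨e, he⟩)]
  · rw [filter_false_of_mem fun T hT heT => he (mem_powerset.1 hT heT), card_empty]

variable [Fintype E]

lemma two_nsmul_sum_mem_sum_superset {M : Type*} [AddCommMonoid M] {μ : Finset E → M} {r : ℕ}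
    (hr : ∀ A, μ A ≠ 0 → #A = r) (e : E) :
    2 • ∑ T with e ∈ T, ∑ A with T ⊆ A, μ A = 2 ^ r • ∑ A with e ∈ A, μ A := by
  have hswap : ∑ T with e ∈ T, ∑ A with T ⊆ A, μ A = ∑ A, #{T ∈ A.powerset | e ∈ T} • μ A := by
    simp_rw [← sum_const]
    exact sum_comm' fun T A => by simp [and_comm]
  rw [hswap, smul_sum, smul_sum, sum_filter]
  refine sum_congr rfl fun A _ => ?_
  by_cases hμ : μ A = 0
  · simp [hμ]
  · rw [smul_smul, two_mul_card_filter_mem_powerset, hr A hμ]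
    split_ifs <;> simp

lemma tiltProb_one (μ : Finset E → ℝ) (P : Finset E → Prop) [DecidablePred P] :
    tiltProb μ (fun _ => 1) P = (∑ A with P A, μ A) / ∑ A, μ A := by
  simp [tiltProb]

lemma IsRayleigh.sum_insert_subset_le {μ : Finset E → ℝ} (hray : IsRayleigh μ)
    (hsum : ∑ A, μ A = 1) {e : E} {T : Finset E} (he : e ∉ T) :
    ∑ A with insert e T ⊆ A, μ A ≤ (∑ A with T ⊆ A, μ A) * ∑ A with e ∈ A, μ A := by
  simpa [tiltProb_one, hsum] using hray (fun _ => 1) (fun _ => one_pos) e T he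

end

theorem stmt_13 {E : Type*} [Fintype E] [DecidableEq E]
    (B : Finset (Finset E)) (r : ℕ)
    -- all members of B have the same size r
    (hBr : ∀ A ∈ B, A.card = r)
    -- μ is a Rayleigh probability measure supported on B
    (μ : Finset E → ℝ)
    (h0 : ∀ A, 0 ≤ μ A)
    (hsupp : ∀ A, μ A ≠ 0 → A ∈ B)
    (hsum : (∑ A : Finset E, μ A) = 1)
    (hray : IsRayleigh μ)
    -- with marginals q
    (q : E → ℝ)
    (hq : ∀ e, q e = ∑ A ∈ univ.filter (fun A => e ∈ A), μ A)
    -- ν is the law of the 1/2-thinning S of B ∼ μ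
    (ν : Finset E → ℝ)
    (hν : ∀ T : Finset E, ν T = (∑ A ∈ univ.filter (fun A => T ⊆ A), μ A) / 2 ^ r) :
    -- P[e ∈ S] = q_e/2
    (∀ e, ∑ T ∈ univ.filter (fun T => e ∈ T), ν T = q e / 2) ∧
    -- P[e ∈ S | S∖{e} = T] ≤ q_e
    (∀ e : E, ∀ T : Finset E, e ∉ T → 0 < ν T + ν (insert e T) →
      ν (insert e T) / (ν T + ν (insert e T)) ≤ q e) := by
  have h2r : (0 : ℝ) < 2 ^ r := by positivity
  refine ⟨fun e => ?_, fun e T he hpos => ?_⟩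
  · have hcount := two_nsmul_sum_mem_sum_superset (fun A hA => hBr A (hsupp A hA)) e
    simp only [nsmul_eq_mul, Nat.cast_ofNat, Nat.cast_pow, ← hq] at hcount
    simp only [hν, ← sum_div]
    rw [div_eq_div_iff h2r.ne' two_ne_zero]
    linarith
  · simp only [hν, ← add_div, div_div_div_cancel_right₀ h2r.ne'] at hpos ⊢
    set a := ∑ A with insert e T ⊆ A, μ A
    set b := ∑ A with T ⊆ A, μ A
    have hrayleigh : a ≤ b * q e := hq e ▸ hray.sum_insert_subset_le hsum he
    have ha : 0 ≤ a := sum_nonneg fun A _ => h0 A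
    have hq0 : 0 ≤ q e := hq e ▸ sum_nonneg fun A _ => h0 A
    rw [div_le_iff₀ ((div_pos_iff_of_pos_right h2r).1 hpos)]
    linarith [mul_nonneg ha hq0]
end
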